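/- arXiv:math/9812112 — 12 statements merged into one kernel-verified Lean document; each statement's English description precedes it below -/
import Mathlib

section
/- Let F be a field of characteristic not equal to 2, and let R = F[a,b,c,x,y,z] be a polynomial ring. Let I be the ideal of R generated by the 2×2 permanents of the matrix [[a,b,c],[x,y,z]], i.e., by ay+bx, az+cx, bz+cy. Then the monomial b·c·x belongs to I. -/
open MvPolynomial

/-! The identity `2bcx = c(ay + bx) + b(az + cx) - a(bz + cy)` puts `2bcx` in the ideal,
and `2` is a unit when the characteristic is not `2`. -/

theorem two_mul_mul_mul_mem_span_subpermanents {R : Type*} [CommRing R] (a b c x y z : R) :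
    2 * (b * c * x) ∈ Ideal.span {a * y + b * x, a * z + c * x, b * z + c * y} := by
  have h₁ : a * y + b * x ∈ Ideal.span {a * y + b * x, a * z + c * x, b * z + c * y} :=
    Ideal.subset_span (by simp)
  have h₂ : a * z + c * x ∈ Ideal.span {a * y + b * x, a * z + c * x, b * z + c * y} :=
    Ideal.subset_span (by simp)
  have h₃ : b * z + c * y ∈ Ideal.span {a * y + b * x, a * z + c * x, b * z + c * y} :=
    Ideal.subset_span (by simp)
  have key : 2 * (b * c * x) = c * (a * y + b * x) + b * (a * z + c * x) - a * (b * z + c * y) := by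
    ring
  rw [key]
  exact Ideal.sub_mem _ (Ideal.add_mem _ (Ideal.mul_mem_left _ _ h₁) (Ideal.mul_mem_left _ _ h₂))
    (Ideal.mul_mem_left _ _ h₃)

/-- `a, b, c, x, y, z` are `X 0, …, X 5`. -/
theorem bcx_mem_permanental_ideal (F : Type*) [Field F] (h2 : (2 : F) ≠ 0) :
    (X 1 * X 2 * X 3 : MvPolynomial (Fin 6) F) ∈
      Ideal.span {X 0 * X 4 + X 1 * X 3, X 0 * X 5 + X 2 * X 3,
        X 1 * X 5 + X 2 * X 4} := by
  have two_isUnit : IsUnit (2 : MvPolynomial (Fin 6) F) := by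
    simpa only [map_ofNat] using (isUnit_iff_ne_zero.mpr h2).map (C : F →+* MvPolynomial (Fin 6) F)
  exact (Ideal.unit_mul_mem_iff_mem _ two_isUnit).mp
    (two_mul_mul_mul_mem_span_subpermanents _ _ _ _ _ _)
end

section
/- Let F be a field of characteristic not 2, and let R be the polynomial ring over F in the nine variables a,b,c,x,y,z,u,v,w of the 3×3 matrix M = [[a,b,c],[x,y,z],[u,v,w]]. Let I = P_2(M) be the ideal generated by all nine 2×2 subpermanents of M. Then a·y·w² ∈ I. -/
open MvPolynomial

/-! Twice `a·y·w²` is an explicit combination of five of the nine subpermanents, and `2` is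
invertible in `F`. -/

/-- The permanent of the 2×2 submatrix of `M` on rows `i, k` and columns `j, l`. -/
def subpermanent₂ {R m n : Type*} [CommRing R] (M : Matrix m n R) (i k : m) (j l : n) : R :=
  M i j * M k l + M k j * M i l

theorem two_mul_diag_mul_sq_eq_subpermanent₂_combination {R : Type*} [CommRing R]
    (M : Matrix (Fin 3) (Fin 3) R) :
    2 * (M 0 0 * M 1 1 * M 2 2 ^ 2) =
      M 1 1 * M 2 2 * subpermanent₂ M 0 2 0 2 - M 2 0 * M 0 2 * subpermanent₂ M 1 2 1 2 +
        M 2 1 * M 0 2 * subpermanent₂ M 1 2 0 2 - M 1 0 * M 2 2 * subpermanent₂ M 0 2 1 2 +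
        M 2 2 ^ 2 * subpermanent₂ M 0 1 0 1 := by
  unfold subpermanent₂
  ring

theorem isUnit_two_mvPolynomial {σ F : Type*} [Field F] (h2 : (2 : F) ≠ 0) :
    IsUnit (2 : MvPolynomial σ F) := by
  simpa only [map_ofNat] using h2.isUnit.map (C : F →+* MvPolynomial σ F)

/-- `R = F[a,b,c,x,y,z,u,v,w]` is the polynomial ring in the entries of the
generic 3×3 matrix `M = [[a,b,c],[x,y,z],[u,v,w]]`, with entry `(i,j)` the
variable `X (i,j)`.  `I = P₂(M)` is generated by all nine 2×2 subpermanents.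
Then `a·y·w² ∈ I`. -/
theorem ayw_sq_mem_permanental_ideal (F : Type*) [Field F] (h2 : (2 : F) ≠ 0) :
    (X (0, 0) * X (1, 1) * X (2, 2) ^ 2 : MvPolynomial (Fin 3 × Fin 3) F) ∈
      Ideal.span {f : MvPolynomial (Fin 3 × Fin 3) F |
        ∃ i k j l : Fin 3, i < k ∧ j < l ∧
          f = X (i, j) * X (k, l) + X (k, j) * X (i, l)} := by
  set M : Matrix (Fin 3) (Fin 3) (MvPolynomial (Fin 3 × Fin 3) F) := fun i j ↦ X (i, j)
  have subpermanent₂_mem (i k j l : Fin 3) (hik : i < k) (hjl : j < l) :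
      subpermanent₂ M i k j l ∈ Ideal.span {f : MvPolynomial (Fin 3 × Fin 3) F |
        ∃ i k j l : Fin 3, i < k ∧ j < l ∧ f = X (i, j) * X (k, l) + X (k, j) * X (i, l)} :=
    Ideal.subset_span ⟨i, k, j, l, hik, hjl, rfl⟩
  rw [← Ideal.unit_mul_mem_iff_mem _ (isUnit_two_mvPolynomial h2),
    two_mul_diag_mul_sq_eq_subpermanent₂_combination M]
  refine add_mem (sub_mem (add_mem (sub_mem ?_ ?_) ?_) ?_) ?_ <;>
    exact Ideal.mul_mem_left _ _ (subpermanent₂_mem _ _ _ _ (by decide) (by decide))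
end

section
/- Let F be a field of characteristic not 2, and let M = [[a,b,c],[x,y,z],[u,v,w]] be the generic 3×3 matrix over R = F[a,b,c,x,y,z,u,v,w]. Let I = P_2(M) be the ideal generated by the nine 2×2 subpermanents of M. Then the product c·y·u of the anti-diagonal entries is NOT in I, but its square (c·y·u)² is in I. -/
open MvPolynomial

namespace CyuAux

variable {F : Type*} [Field F]

/-- `dd p` is the exponent of the single variable `p`. -/
noncomputable abbrev dd (p : Fin 3 × Fin 3) : (Fin 3 × Fin 3) →₀ ℕ := Finsupp.single p 1

/-- The signed sum of the coefficients of the six "permutation monomials";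
this linear functional kills every `r * g` for `g` a 2×2 subpermanent. -/
noncomputable def lam (p : MvPolynomial (Fin 3 × Fin 3) F) : F :=
  (coeff (dd (0,0) + dd (1,2) + dd (2,1)) p + coeff (dd (0,1) + dd (1,0) + dd (2,2)) p
    + coeff (dd (0,2) + dd (1,1) + dd (2,0)) p)
  - (coeff (dd (0,0) + dd (1,1) + dd (2,2)) p + coeff (dd (0,1) + dd (1,2) + dd (2,0)) p
    + coeff (dd (0,2) + dd (1,0) + dd (2,1)) p)

lemma lam_add (p q : MvPolynomial (Fin 3 × Fin 3) F) : lam (p + q) = lam p + lam q := by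
  simp only [lam, coeff_add]; ring

lemma lam_zero : lam (0 : MvPolynomial (Fin 3 × Fin 3) F) = 0 := by
  simp [lam]

lemma XmulX (a b : Fin 3 × Fin 3) :
    (X a * X b : MvPolynomial (Fin 3 × Fin 3) F) = monomial (dd a + dd b) 1 := by
  rw [X, X, monomial_mul, one_mul]

lemma XmulXmulX (a b c : Fin 3 × Fin 3) :
    (X a * X b * X c : MvPolynomial (Fin 3 × Fin 3) F) = monomial (dd a + dd b + dd c) 1 := by
  rw [XmulX, X, monomial_mul, one_mul]

set_option maxHeartbeats 1000000 in
lemma key1 (r : MvPolynomial (Fin 3 × Fin 3) F) :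
    lam (r * (X (0,0) * X (1,1) + X (1,0) * X (0,1))) = 0 := by
  rw [XmulX, XmulX, mul_add]
  simp only [lam, coeff_add, coeff_mul_monomial']
  simp +decide [Finsupp.le_def, Finsupp.single_apply, Prod.forall, Fin.forall_fin_succ,
    Prod.mk.injEq]
  try rw [sub_eq_zero]
  try (congr 1; ext a; simp [Finsupp.single_apply, Finsupp.tsub_apply]; try split_ifs <;> omega)

set_option maxHeartbeats 1000000 in
lemma key2 (r : MvPolynomial (Fin 3 × Fin 3) F) :
    lam (r * (X (0,0) * X (1,2) + X (1,0) * X (0,2))) = 0 := by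
  rw [XmulX, XmulX, mul_add]
  simp only [lam, coeff_add, coeff_mul_monomial']
  simp +decide [Finsupp.le_def, Finsupp.single_apply, Prod.forall, Fin.forall_fin_succ,
    Prod.mk.injEq]
  try rw [sub_eq_zero]
  try (congr 1; ext a; simp [Finsupp.single_apply, Finsupp.tsub_apply]; try split_ifs <;> omega)

set_option maxHeartbeats 1000000 in
lemma key3 (r : MvPolynomial (Fin 3 × Fin 3) F) :
    lam (r * (X (0,1) * X (1,2) + X (1,1) * X (0,2))) = 0 := by
  rw [XmulX, XmulX, mul_add]
  simp only [lam, coeff_add, coeff_mul_monomial']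
  simp +decide [Finsupp.le_def, Finsupp.single_apply, Prod.forall, Fin.forall_fin_succ,
    Prod.mk.injEq]
  try rw [sub_eq_zero]
  try (congr 1; ext a; simp [Finsupp.single_apply, Finsupp.tsub_apply]; try split_ifs <;> omega)

set_option maxHeartbeats 1000000 in
lemma key4 (r : MvPolynomial (Fin 3 × Fin 3) F) :
    lam (r * (X (0,0) * X (2,1) + X (2,0) * X (0,1))) = 0 := by
  rw [XmulX, XmulX, mul_add]
  simp only [lam, coeff_add, coeff_mul_monomial']
  simp +decide [Finsupp.le_def, Finsupp.single_apply, Prod.forall, Fin.forall_fin_succ,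
    Prod.mk.injEq]
  try rw [sub_eq_zero]
  try (congr 1; ext a; simp [Finsupp.single_apply, Finsupp.tsub_apply]; try split_ifs <;> omega)

set_option maxHeartbeats 1000000 in
lemma key5 (r : MvPolynomial (Fin 3 × Fin 3) F) :
    lam (r * (X (0,0) * X (2,2) + X (2,0) * X (0,2))) = 0 := by
  rw [XmulX, XmulX, mul_add]
  simp only [lam, coeff_add, coeff_mul_monomial']
  simp +decide [Finsupp.le_def, Finsupp.single_apply, Prod.forall, Fin.forall_fin_succ,
    Prod.mk.injEq]
  try rw [sub_eq_zero]
  try (congr 1; ext a; simp [Finsupp.single_apply, Finsupp.tsub_apply]; try split_ifs <;> omega)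

set_option maxHeartbeats 1000000 in
lemma key6 (r : MvPolynomial (Fin 3 × Fin 3) F) :
    lam (r * (X (0,1) * X (2,2) + X (2,1) * X (0,2))) = 0 := by
  rw [XmulX, XmulX, mul_add]
  simp only [lam, coeff_add, coeff_mul_monomial']
  simp +decide [Finsupp.le_def, Finsupp.single_apply, Prod.forall, Fin.forall_fin_succ,
    Prod.mk.injEq]
  try rw [sub_eq_zero]
  try (congr 1; ext a; simp [Finsupp.single_apply, Finsupp.tsub_apply]; try split_ifs <;> omega)

set_option maxHeartbeats 1000000 in
lemma key7 (r : MvPolynomial (Fin 3 × Fin 3) F) :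
    lam (r * (X (1,0) * X (2,1) + X (2,0) * X (1,1))) = 0 := by
  rw [XmulX, XmulX, mul_add]
  simp only [lam, coeff_add, coeff_mul_monomial']
  simp +decide [Finsupp.le_def, Finsupp.single_apply, Prod.forall, Fin.forall_fin_succ,
    Prod.mk.injEq]
  try rw [sub_eq_zero]
  try (congr 1; ext a; simp [Finsupp.single_apply, Finsupp.tsub_apply]; try split_ifs <;> omega)

set_option maxHeartbeats 1000000 in
lemma key8 (r : MvPolynomial (Fin 3 × Fin 3) F) :
    lam (r * (X (1,0) * X (2,2) + X (2,0) * X (1,2))) = 0 := by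
  rw [XmulX, XmulX, mul_add]
  simp only [lam, coeff_add, coeff_mul_monomial']
  simp +decide [Finsupp.le_def, Finsupp.single_apply, Prod.forall, Fin.forall_fin_succ,
    Prod.mk.injEq]
  try rw [sub_eq_zero]
  try (congr 1; ext a; simp [Finsupp.single_apply, Finsupp.tsub_apply]; try split_ifs <;> omega)

set_option maxHeartbeats 1000000 in
lemma key9 (r : MvPolynomial (Fin 3 × Fin 3) F) :
    lam (r * (X (1,1) * X (2,2) + X (2,1) * X (1,2))) = 0 := by
  rw [XmulX, XmulX, mul_add]
  simp only [lam, coeff_add, coeff_mul_monomial']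
  simp +decide [Finsupp.le_def, Finsupp.single_apply, Prod.forall, Fin.forall_fin_succ,
    Prod.mk.injEq]
  try rw [sub_eq_zero]
  try (congr 1; ext a; simp [Finsupp.single_apply, Finsupp.tsub_apply]; try split_ifs <;> omega)

set_option maxHeartbeats 1000000 in
lemma lam_cyu : lam (X (0,2) * X (1,1) * X (2,0) : MvPolynomial (Fin 3 × Fin 3) F) = 1 := by
  rw [XmulXmulX]
  simp only [lam, coeff_monomial]
  simp +decide [Finsupp.ext_iff, Finsupp.single_apply, Prod.forall, Fin.forall_fin_succ,
    Prod.mk.injEq]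

set_option maxHeartbeats 1000000 in
lemma lam_vanish {p : MvPolynomial (Fin 3 × Fin 3) F}
    (hp : p ∈ Ideal.span {f : MvPolynomial (Fin 3 × Fin 3) F |
        ∃ i k j l : Fin 3, i < k ∧ j < l ∧
          f = X (i, j) * X (k, l) + X (k, j) * X (i, l)}) :
    lam p = 0 := by
  have main : ∀ r : MvPolynomial (Fin 3 × Fin 3) F, lam (r * p) = 0 := by
    refine Submodule.span_induction (p := fun x _ => ∀ r, lam (r * x) = 0) ?_ ?_ ?_ ?_ hp
    · rintro f ⟨i, k, j, l, hik, hjl, rfl⟩ r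
      fin_cases i <;> fin_cases k <;> fin_cases j <;> fin_cases l <;>
        simp only [show ∀ h, (⟨0, h⟩ : Fin 3) = 0 from fun _ => rfl, show ∀ h, (⟨1, h⟩ : Fin 3) = 1 from fun _ => rfl,
          show ∀ h, (⟨2, h⟩ : Fin 3) = 2 from fun _ => rfl] at hik hjl ⊢ <;>
        first
          | exact absurd hik (by decide)
          | exact absurd hjl (by decide)
          | with_reducible exact key1 r
          | with_reducible exact key2 r
          | with_reducible exact key3 r
          | with_reducible exact key4 r
          | with_reducible exact key5 r
          | with_reducible exact key6 r
          | with_reducible exact key7 r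
          | with_reducible exact key8 r
          | with_reducible exact key9 r
    · intro r; rw [mul_zero, lam_zero]
    · intro x y _ _ hx hy r; rw [mul_add, lam_add, hx r, hy r, add_zero]
    · intro a x _ hx r
      rw [smul_eq_mul, ← mul_assoc]
      exact hx (r * a)
  simpa using main 1

end CyuAux

open CyuAux in
/-- `M = [[a,b,c],[x,y,z],[u,v,w]]` generic 3×3 matrix, entry `(i,j)` is the
variable `X (i,j)`; `I = P₂(M)` is generated by the nine 2×2 subpermanents.
The anti-diagonal product `c·y·u = X (0,2) * X (1,1) * X (2,0)` is not in `I`,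
but its square is. -/
theorem cyu_not_mem_but_sq_mem (F : Type*) [Field F] (h2 : (2 : F) ≠ 0) :
    (X (0, 2) * X (1, 1) * X (2, 0) : MvPolynomial (Fin 3 × Fin 3) F) ∉
      Ideal.span {f : MvPolynomial (Fin 3 × Fin 3) F |
        ∃ i k j l : Fin 3, i < k ∧ j < l ∧
          f = X (i, j) * X (k, l) + X (k, j) * X (i, l)} ∧
    (X (0, 2) * X (1, 1) * X (2, 0) : MvPolynomial (Fin 3 × Fin 3) F) ^ 2 ∈
      Ideal.span {f : MvPolynomial (Fin 3 × Fin 3) F |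
        ∃ i k j l : Fin 3, i < k ∧ j < l ∧
          f = X (i, j) * X (k, l) + X (k, j) * X (i, l)} := by
  set S : Set (MvPolynomial (Fin 3 × Fin 3) F) :=
    {f : MvPolynomial (Fin 3 × Fin 3) F |
      ∃ i k j l : Fin 3, i < k ∧ j < l ∧
        f = X (i, j) * X (k, l) + X (k, j) * X (i, l)} with hS
  constructor
  · intro hmem
    have := lam_vanish hmem
    rw [lam_cyu] at this
    exact one_ne_zero this
  · have hg2 : (X (0,0) * X (1,2) + X (1,0) * X (0,2) : MvPolynomial (Fin 3 × Fin 3) F)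
        ∈ Ideal.span S :=
      Ideal.subset_span ⟨0, 1, 0, 2, by decide, by decide, rfl⟩
    have hg3 : (X (0,1) * X (1,2) + X (1,1) * X (0,2) : MvPolynomial (Fin 3 × Fin 3) F)
        ∈ Ideal.span S :=
      Ideal.subset_span ⟨0, 1, 1, 2, by decide, by decide, rfl⟩
    have hg5 : (X (0,0) * X (2,2) + X (2,0) * X (0,2) : MvPolynomial (Fin 3 × Fin 3) F)
        ∈ Ideal.span S :=
      Ideal.subset_span ⟨0, 2, 0, 2, by decide, by decide, rfl⟩
    have hg6 : (X (0,1) * X (2,2) + X (2,1) * X (0,2) : MvPolynomial (Fin 3 × Fin 3) F)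
        ∈ Ideal.span S :=
      Ideal.subset_span ⟨0, 2, 1, 2, by decide, by decide, rfl⟩
    have hg7 : (X (1,0) * X (2,1) + X (2,0) * X (1,1) : MvPolynomial (Fin 3 × Fin 3) F)
        ∈ Ideal.span S :=
      Ideal.subset_span ⟨1, 2, 0, 1, by decide, by decide, rfl⟩
    have hmem2 :
        (2 : MvPolynomial (Fin 3 × Fin 3) F) *
          (X (0, 2) * X (1, 1) * X (2, 0)) ^ 2 ∈ Ideal.span S := by
      have hid : (2 : MvPolynomial (Fin 3 × Fin 3) F) *
            (X (0, 2) * X (1, 1) * X (2, 0)) ^ 2 =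
          (X (0,2) * X (2,0) * X (2,0) * X (1,1)) *
            (X (0,1) * X (1,2) + X (1,1) * X (0,2))
          - (X (0,1) * X (1,2) * X (2,0) * X (1,1)) *
            (X (0,0) * X (2,2) + X (2,0) * X (0,2))
          - (X (0,1) * X (2,2) * X (1,0) * X (2,1)) *
            (X (0,0) * X (1,2) + X (1,0) * X (0,2))
          + (X (1,0) * X (1,0) * X (0,2) * X (2,1)) *
            (X (0,1) * X (2,2) + X (2,1) * X (0,2))
          + (X (0,0) * X (0,1) * X (2,2) * X (1,2)
              - X (1,0) * X (0,2) * X (0,2) * X (2,1)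
              + X (0,2) * X (0,2) * X (2,0) * X (1,1)) *
            (X (1,0) * X (2,1) + X (2,0) * X (1,1)) := by
        ring
      rw [hid]
      refine add_mem (add_mem (sub_mem (sub_mem
        (Ideal.mul_mem_left _ _ hg3) (Ideal.mul_mem_left _ _ hg5))
        (Ideal.mul_mem_left _ _ hg2)) (Ideal.mul_mem_left _ _ hg6))
        (Ideal.mul_mem_left _ _ hg7)
    have hfin : (X (0, 2) * X (1, 1) * X (2, 0) : MvPolynomial (Fin 3 × Fin 3) F) ^ 2 =
        C (2⁻¹ : F) * ((2 : MvPolynomial (Fin 3 × Fin 3) F) *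
          (X (0, 2) * X (1, 1) * X (2, 0)) ^ 2) := by
      rw [← mul_assoc, ← map_ofNat (C : F →+* MvPolynomial (Fin 3 × Fin 3) F) 2, ← C_mul,
        inv_mul_cancel₀ h2, C_1, one_mul]
    rw [hfin]
    exact Ideal.mul_mem_left _ _ hmem2
end

section
/- Let F be a field of characteristic not 2 and let M = [[a,b,c],[x,y,z],[u,v,w]] be the generic 3×3 matrix over R = F[a,b,c,x,y,z,u,v,w]. Then the ideal P_2(M) generated by all nine 2×2 subpermanents of M is not a radical ideal; specifically, c·y·u lies in the radical of P_2(M) but not in P_2(M). -/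
/-!
Substituting `X (i, j) ↦ eᵢ ∧ fⱼ` into the exterior algebra on `e₀, e₁, e₂, f₀, f₁, f₂` gives
pairwise commuting images, and anticommutativity makes every 2×2 subpermanent vanish, while
`c·y·u` goes to `e₀ ∧ f₂ ∧ e₁ ∧ f₁ ∧ e₂ ∧ f₀ ≠ 0`. So `c·y·u ∉ P₂(M)`, although `2·(c·y·u)²` is an
explicit combination of four subpermanents.
-/

open MvPolynomial ExteriorAlgebra

namespace ExteriorAlgebra
variable {R M : Type*} [CommRing R] [AddCommGroup M] [Module R M]

theorem ι_mul_ι_comm (a b : M) : ι R a * ι R b = -(ι R b * ι R a) :=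
  eq_neg_of_add_eq_zero_left (ι_add_mul_swap a b)

theorem commute_ι_mul_ι_ι (a b c : M) : Commute (ι R a * ι R b) (ι R c) := by
  rw [Commute, SemiconjBy, mul_assoc, ι_mul_ι_comm b c, mul_neg, ← mul_assoc,
    ι_mul_ι_comm a c, neg_mul, neg_neg, mul_assoc]

theorem commute_ι_mul_ι (a b c d : M) : Commute (ι R a * ι R b) (ι R c * ι R d) :=
  (commute_ι_mul_ι_ι a b c).mul_right (commute_ι_mul_ι_ι a b d)

theorem ι_mul_ι_mul_ι_mul_ι_add_swap (a b c d : M) :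
    ι R a * ι R b * (ι R c * ι R d) + ι R c * ι R b * (ι R a * ι R d) = 0 := by
  have h : ι R c * ι R b * ι R a = -(ι R a * ι R b * ι R c) := by
    rw [(commute_ι_mul_ι_ι c b a).eq, ι_mul_ι_comm c b, mul_neg, ← mul_assoc]
  rw [← mul_assoc, ← mul_assoc, h, neg_mul, add_neg_cancel]

theorem ιMulti_ne_zero_of_linearIndependent {K E : Type*} [Field K] [AddCommGroup E]
    [Module K E] {n : ℕ} {v : Fin n → E} (hv : LinearIndependent K v) : ιMulti K n v ≠ 0 := by
  have := (exteriorPower.ιMulti_family_linearIndependent_field (n := n) hv).ne_zero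
    ⟨Finset.univ, by simp⟩
  rw [exteriorPower.ιMulti_family, (OrderEmbedding.strictMono _).eq_id, Function.comp_id] at this
  rwa [ne_eq, ← Submodule.coe_eq_zero, exteriorPower.ιMulti_apply_coe] at this

end ExteriorAlgebra

section Subpermanents
variable (m n R : Type*) [LinearOrder m] [LinearOrder n] [CommSemiring R]

def subpermanents₂ : Set (MvPolynomial (m × n) R) :=
  {f | ∃ i k j l, i < k ∧ j < l ∧ f = X (i, j) * X (k, l) + X (k, j) * X (i, l)}

variable {m n R}

theorem span_subpermanents₂_le_ker_aeval {S : Type*} [CommSemiring S] [Algebra R S]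
    (z : m × n → S) (hz : ∀ i k j l, z (i, j) * z (k, l) + z (k, j) * z (i, l) = 0) :
    Ideal.span (subpermanents₂ m n R) ≤ RingHom.ker (aeval z) := by
  rw [Ideal.span_le]
  rintro _ ⟨i, k, j, l, -, -, rfl⟩
  simp [hz]

end Subpermanents

theorem two_mul_sq_mem_span_subpermanents₂ (R : Type*) [CommRing R] :
    2 * (X (0, 2) * X (1, 1) * X (2, 0)) ^ 2 ∈ Ideal.span (subpermanents₂ (Fin 3) (Fin 3) R) := by
  have mem (i k j l : Fin 3) (hik : i < k) (hjl : j < l) :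
      X (i, j) * X (k, l) + X (k, j) * X (i, l) ∈ Ideal.span (subpermanents₂ (Fin 3) (Fin 3) R) :=
    Ideal.subset_span ⟨i, k, j, l, hik, hjl, rfl⟩
  have hcomb : (2 : MvPolynomial (Fin 3 × Fin 3) R) * (X (0, 2) * X (1, 1) * X (2, 0)) ^ 2 =
      X (0, 2) * X (1, 2) * X (2, 0) * X (2, 1) * (X (0, 0) * X (1, 1) + X (1, 0) * X (0, 1))
      + X (0, 2) * X (1, 1) * X (2, 0) * X (2, 1) * (X (0, 0) * X (1, 2) + X (1, 0) * X (0, 2))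
      + (2 * X (0, 2) * X (1, 1) * X (2, 0) ^ 2 - X (0, 2) * X (1, 0) * X (2, 0) * X (2, 1))
        * (X (0, 1) * X (1, 2) + X (1, 1) * X (0, 2))
      - 2 * X (0, 2) * X (1, 1) * X (1, 2) * X (2, 0)
        * (X (0, 0) * X (2, 1) + X (2, 0) * X (0, 1)) := by
    ring
  rw [hcomb]
  refine sub_mem (add_mem (add_mem ?_ ?_) ?_) ?_ <;> apply Ideal.mul_mem_left <;> apply mem <;> decide

theorem X_mul_X_mul_X_mem_radical_span_subpermanents₂ {R : Type*} [CommRing R]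
    (h2 : IsUnit (2 : R)) :
    X (0, 2) * X (1, 1) * X (2, 0) ∈ (Ideal.span (subpermanents₂ (Fin 3) (Fin 3) R)).radical := by
  have h2' : IsUnit (2 : MvPolynomial (Fin 3 × Fin 3) R) := by
    simpa only [map_ofNat] using h2.map (C : R →+* MvPolynomial (Fin 3 × Fin 3) R)
  exact ⟨2, (Ideal.unit_mul_mem_iff_mem _ h2').mp (two_mul_sq_mem_span_subpermanents₂ R)⟩

open scoped IsMulCommutative in
theorem X_mul_X_mul_X_notMem_span_subpermanents₂ (K : Type*) [Field K] :
    X (0, 2) * X (1, 1) * X (2, 0) ∉ Ideal.span (subpermanents₂ (Fin 3) (Fin 3) K) := by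
  let e := Pi.basisFun K (Fin 3 ⊕ Fin 3)
  let z : Fin 3 × Fin 3 → ExteriorAlgebra K (Fin 3 ⊕ Fin 3 → K) :=
    fun p => ι K (e (.inl p.1)) * ι K (e (.inr p.2))
  let S := Algebra.adjoin K (Set.range z)
  have : IsMulCommutative S := Algebra.isMulCommutative_adjoin K <| by
    rintro _ ⟨p, rfl⟩ _ ⟨q, rfl⟩
    exact (commute_ι_mul_ι _ _ _ _).eq
  let zS : Fin 3 × Fin 3 → S := fun p => ⟨z p, Algebra.subset_adjoin ⟨p, rfl⟩⟩
  intro hmem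
  have h0 := span_subpermanents₂_le_ker_aeval zS (fun i k j l => Subtype.ext
    (ι_mul_ι_mul_ι_mul_ι_add_swap _ _ _ _)) hmem
  let σ : Fin 6 → Fin 3 ⊕ Fin 3 := ![.inl 0, .inr 2, .inl 1, .inr 1, .inl 2, .inr 0]
  have himage :
      (aeval zS (X (0, 2) * X (1, 1) * X (2, 0) : MvPolynomial (Fin 3 × Fin 3) K) :
        ExteriorAlgebra K (Fin 3 ⊕ Fin 3 → K)) = ιMulti K 6 (e ∘ σ) := by
    simp only [map_mul, aeval_X, Subalgebra.coe_mul, zS, z, ιMulti_apply, List.ofFn_succ,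
      List.ofFn_zero, List.prod_cons, List.prod_nil, mul_one, mul_assoc]
    rfl
  refine ιMulti_ne_zero_of_linearIndependent (e.linearIndependent.comp σ (by decide)) ?_
  rw [← himage, RingHom.mem_ker.mp h0, ZeroMemClass.coe_zero]

/-- `M = [[a,b,c],[x,y,z],[u,v,w]]` generic 3×3 matrix over
`R = F[a,...,w]`, entry `(i,j)` being the variable `X (i,j)`;
`P₂(M)` is generated by the nine 2×2 subpermanents.  Then `P₂(M)` is not
radical: `c·y·u` lies in the radical of `P₂(M)` but not in `P₂(M)`. -/
theorem permanental_ideal_not_radical (F : Type*) [Field F] (h2 : (2 : F) ≠ 0) :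
    (X (0, 2) * X (1, 1) * X (2, 0) : MvPolynomial (Fin 3 × Fin 3) F) ∈
      (Ideal.span {f : MvPolynomial (Fin 3 × Fin 3) F |
        ∃ i k j l : Fin 3, i < k ∧ j < l ∧
          f = X (i, j) * X (k, l) + X (k, j) * X (i, l)}).radical ∧
    (X (0, 2) * X (1, 1) * X (2, 0) : MvPolynomial (Fin 3 × Fin 3) F) ∉
      Ideal.span {f : MvPolynomial (Fin 3 × Fin 3) F |
        ∃ i k j l : Fin 3, i < k ∧ j < l ∧
          f = X (i, j) * X (k, l) + X (k, j) * X (i, l)} ∧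
    ¬ (Ideal.span {f : MvPolynomial (Fin 3 × Fin 3) F |
        ∃ i k j l : Fin 3, i < k ∧ j < l ∧
          f = X (i, j) * X (k, l) + X (k, j) * X (i, l)}).IsRadical := by
  have hrad := X_mul_X_mul_X_mem_radical_span_subpermanents₂ (isUnit_iff_ne_zero.mpr h2)
  have hnotMem := X_mul_X_mul_X_notMem_span_subpermanents₂ F
  exact ⟨hrad, hnotMem, fun hI => hnotMem (hI hrad)⟩
end

section
/- Let F be a field of characteristic not 2 and let M be the generic 3×3 matrix with entries x_{ij}, 1 ≤ i,j ≤ 3, over R = F[x_{ij}]. Then the prime ideal P generated by all entries of M except x_{11}, x_{12}, x_{13} (i.e., all entries in rows 2 and 3) contains P_2(M), and P is a minimal prime over P_2(M). -/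
/-!
The ideal `P` of rows `≠ r₀` is the kernel of the substitution killing those variables, hence
prime, and it visibly contains every subpermanent. For minimality, let `Q` be a prime with
`P₂ ≤ Q ≤ P`. Given an entry `y_c` of a row other than `r₀`, pick two further columns `a, b`
and write `x` for row `r₀`; then
`2 x_a x_b y_c = x_a (x_c y_b + y_c x_b) + x_b (x_c y_a + y_c x_a) - x_c (x_a y_b + y_a x_b)`
lies in `Q`, while `2`, `x_a`, `x_b` do not even lie in `P`, so `y_c ∈ Q`.
-/

open MvPolynomial

theorem Ideal.IsPrime.mem_of_subpermanents_mem {A : Type*} [CommRing A] {Q : Ideal A}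
    (hQ : Q.IsPrime) (h2 : (2 : A) ∉ Q) {a b c p q r : A}
    (hcb : c * q + r * b ∈ Q) (hca : c * p + r * a ∈ Q) (hab : a * q + p * b ∈ Q)
    (ha : a ∉ Q) (hb : b ∉ Q) : r ∈ Q := by
  have h : 2 * a * b * r ∈ Q := by
    rw [show 2 * a * b * r = a * (c * q + r * b) + b * (c * p + r * a) - c * (a * q + p * b) by
      ring]
    exact Q.sub_mem (Q.add_mem (Q.mul_mem_left a hcb) (Q.mul_mem_left b hca))
      (Q.mul_mem_left c hab)
  exact (hQ.mem_or_mem h).resolve_left (hQ.mul_notMem (hQ.mul_notMem h2 ha) hb)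

namespace MvPolynomial

section SpanXImage

variable {σ R : Type*} [CommRing R] (s : Set σ)

theorem sub_bind₁_indicator_compl_mem_span_X_image (f : MvPolynomial σ R) :
    f - bind₁ (sᶜ.indicator X) f ∈ Ideal.span (X '' s) := by
  induction f using MvPolynomial.induction_on with
  | C a => simp
  | add p q hp hq => simpa only [map_add, add_sub_add_comm] using Ideal.add_mem _ hp hq
  | mul_X p i hp =>
    by_cases hi : i ∈ s
    · simpa [Set.indicator_of_notMem (Set.notMem_compl_iff.mpr hi)] using
        Ideal.mul_mem_left _ p (Ideal.subset_span (Set.mem_image_of_mem X hi))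
    · simpa [Set.indicator_of_mem (Set.mem_compl hi), sub_mul] using
        Ideal.mul_mem_right (X i) _ hp

theorem ker_bind₁_indicator_compl :
    RingHom.ker (bind₁ (sᶜ.indicator (X : σ → MvPolynomial σ R))) =
      Ideal.span (X '' s) := by
  refine le_antisymm (fun f hf => ?_) ?_
  · simpa [RingHom.mem_ker.mp hf] using sub_bind₁_indicator_compl_mem_span_X_image s f
  · rw [Ideal.span_le]
    rintro _ ⟨i, hi, rfl⟩
    simp [Set.indicator_of_notMem (Set.notMem_compl_iff.mpr hi)]

theorem isPrime_span_X_image [IsDomain R] :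
    (Ideal.span (X '' s : Set (MvPolynomial σ R))).IsPrime :=
  ker_bind₁_indicator_compl (R := R) s ▸ RingHom.ker_isPrime _

variable {s}

theorem X_mem_span_X_image_iff [Nontrivial R] {i : σ} :
    (X i : MvPolynomial σ R) ∈ Ideal.span (X '' s) ↔ i ∈ s := by
  simp [mem_ideal_span_X_image, support_X, Finsupp.single_apply_ne_zero]

theorem C_mem_span_X_image_iff {r : R} :
    (C r : MvPolynomial σ R) ∈ Ideal.span (X '' s) ↔ r = 0 := by
  simp [← ker_bind₁_indicator_compl]

end SpanXImage

section Permanental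

variable (R : Type*) [CommRing R] {ι κ : Type*} [LinearOrder ι] [LinearOrder κ]

variable (ι κ) in
noncomputable def permanentalIdeal : Ideal (MvPolynomial (ι × κ) R) :=
  Ideal.span {f | ∃ i k j l, i < k ∧ j < l ∧ f = X (i, j) * X (k, l) + X (k, j) * X (i, l)}

theorem subpermanent_mem_permanentalIdeal {i k : ι} {j l : κ} (hik : i ≠ k) (hjl : j ≠ l) :
    X (i, j) * X (k, l) + X (k, j) * X (i, l) ∈ permanentalIdeal R ι κ := by
  rcases hik.lt_or_gt with hik | hik <;> rcases hjl.lt_or_gt with hjl | hjl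
  · exact Ideal.subset_span ⟨i, k, j, l, hik, hjl, rfl⟩
  · exact Ideal.subset_span ⟨i, k, l, j, hik, hjl, by ring⟩
  · exact Ideal.subset_span ⟨k, i, j, l, hik, hjl, by ring⟩
  · exact Ideal.subset_span ⟨k, i, l, j, hik, hjl, by ring⟩

theorem permanentalIdeal_le_span_X_image_fst_ne (r₀ : ι) :
    permanentalIdeal R ι κ ≤ Ideal.span (X '' {p : ι × κ | p.1 ≠ r₀}) := by
  rw [permanentalIdeal, Ideal.span_le]
  rintro _ ⟨i, k, j, l, hik, -, rfl⟩
  have hX : ∀ {m : ι} (n : κ), m ≠ r₀ →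
      (X (m, n) : MvPolynomial (ι × κ) R) ∈ Ideal.span (X '' {p : ι × κ | p.1 ≠ r₀}) :=
    fun n hm => Ideal.subset_span (Set.mem_image_of_mem X hm)
  by_cases hi : i = r₀
  · have hk : k ≠ r₀ := hi ▸ hik.ne'
    exact Ideal.add_mem _ (Ideal.mul_mem_left _ _ (hX l hk)) (Ideal.mul_mem_right _ _ (hX j hk))
  · exact Ideal.add_mem _ (Ideal.mul_mem_right _ _ (hX j hi)) (Ideal.mul_mem_left _ _ (hX l hi))

theorem span_X_image_fst_ne_mem_minimalPrimes [IsDomain R] (h2 : (2 : R) ≠ 0) (r₀ : ι)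
    (hκ : ∀ c : κ, ∃ a b, a ≠ b ∧ a ≠ c ∧ b ≠ c) :
    Ideal.span (X '' {p : ι × κ | p.1 ≠ r₀} : Set (MvPolynomial (ι × κ) R)) ∈
      (permanentalIdeal R ι κ).minimalPrimes := by
  refine ⟨⟨isPrime_span_X_image _, permanentalIdeal_le_span_X_image_fst_ne R r₀⟩, ?_⟩
  rintro Q ⟨hQ, hPQ⟩ hQP
  rw [Ideal.span_le]
  rintro _ ⟨⟨k, c⟩, hk : k ≠ r₀, rfl⟩
  obtain ⟨a, b, hab, hac, hbc⟩ := hκ c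
  have h2Q : (2 : MvPolynomial (ι × κ) R) ∉ Q := fun h =>
    h2 (C_mem_span_X_image_iff.mp (by simpa only [map_ofNat] using hQP h))
  have hr₀ (n : κ) : (X (r₀, n) : MvPolynomial (ι × κ) R) ∉ Q := fun h =>
    X_mem_span_X_image_iff.mp (hQP h) rfl
  have hsub {j l : κ} (hjl : j ≠ l) :=
    hPQ (subpermanent_mem_permanentalIdeal R (Ne.symm hk) hjl)
  exact hQ.mem_of_subpermanents_mem h2Q (hsub hbc.symm) (hsub hac.symm) (hsub hab)
    (hr₀ a) (hr₀ b)

end Permanental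

end MvPolynomial

/-- `M` is the generic 3×3 matrix with entries `x_{ij} = X (i,j)` and `P₂(M)`
is generated by all 2×2 subpermanents.  The ideal `P` generated by all entries
in rows 2 and 3 (i.e. all `X (i,j)` with `i ≠ 0`) contains `P₂(M)` and is a
minimal prime over `P₂(M)`. -/
theorem row_prime_minimal_over_permanental (F : Type*) [Field F] (h2 : (2 : F) ≠ 0) :
    Ideal.span {f : MvPolynomial (Fin 3 × Fin 3) F |
        ∃ i k j l : Fin 3, i < k ∧ j < l ∧
          f = X (i, j) * X (k, l) + X (k, j) * X (i, l)} ≤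
      Ideal.span {f : MvPolynomial (Fin 3 × Fin 3) F |
        ∃ i j : Fin 3, i ≠ 0 ∧ f = X (i, j)} ∧
    Ideal.span {f : MvPolynomial (Fin 3 × Fin 3) F |
        ∃ i j : Fin 3, i ≠ 0 ∧ f = X (i, j)} ∈
      (Ideal.span {f : MvPolynomial (Fin 3 × Fin 3) F |
        ∃ i k j l : Fin 3, i < k ∧ j < l ∧
          f = X (i, j) * X (k, l) + X (k, j) * X (i, l)}).minimalPrimes := by
  have hrows : {f : MvPolynomial (Fin 3 × Fin 3) F | ∃ i j : Fin 3, i ≠ 0 ∧ f = X (i, j)} =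
      X '' {p | p.1 ≠ 0} := by
    ext f
    simp [eq_comm]
  rw [hrows]
  exact ⟨permanentalIdeal_le_span_X_image_fst_ne F 0,
    span_X_image_fst_ne_mem_minimalPrimes F h2 0 (by decide)⟩
end

section
/- Let F be a field of characteristic not 2 and let M be the generic 3×3 matrix with entries x_{ij} over R = F[x_{ij} : 1 ≤ i,j ≤ 3]. Let P be the ideal generated by the permanent x_{11}x_{22} + x_{12}x_{21} of the upper-left 2×2 submatrix together with all five entries x_{13}, x_{23}, x_{31}, x_{32}, x_{33} outside that submatrix. Then P is a prime ideal containing P_2(M). -/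
open MvPolynomial

/-- A linear polynomial `C a * X + C b` over a domain, with `a ≠ 0` and all common
divisors of `a` and `b` units, is irreducible. -/
lemma BlockPrime.irreducible_linear {D : Type*} [CommRing D] [IsDomain D] {a b : D} (ha : a ≠ 0)
    (h : ∀ c : D, c ∣ a → c ∣ b → IsUnit c) :
    Irreducible (Polynomial.C a * Polynomial.X + Polynomial.C b) := by
  set p : Polynomial D := Polynomial.C a * Polynomial.X + Polynomial.C b with hp
  have hc1 : p.coeff 1 = a := by simp [hp]
  have hc0 : p.coeff 0 = b := by simp [hp]
  have hd : p.natDegree = 1 := Polynomial.natDegree_linear ha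
  have hp0 : p ≠ 0 := by intro h0; rw [h0] at hd; simp at hd
  have key : ∀ u v : Polynomial D, p = u * v → u.natDegree = 0 → IsUnit u := by
    intro u v huv hu0
    obtain ⟨c, rfl⟩ := Polynomial.natDegree_eq_zero.mp hu0
    have hca : c ∣ a := ⟨v.coeff 1, by rw [← hc1, huv, Polynomial.coeff_C_mul]⟩
    have hcb : c ∣ b := ⟨v.coeff 0, by rw [← hc0, huv, Polynomial.coeff_C_mul]⟩
    exact Polynomial.isUnit_C.mpr (h c hca hcb)
  refine ⟨fun hu => ?_, fun f g hfg => ?_⟩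
  · have h0 := Polynomial.natDegree_eq_zero_of_isUnit hu
    omega
  · have hf0 : f ≠ 0 := by rintro rfl; rw [zero_mul] at hfg; exact hp0 hfg
    have hg0 : g ≠ 0 := by rintro rfl; rw [mul_zero] at hfg; exact hp0 hfg
    have hsum : f.natDegree + g.natDegree = 1 := by
      rw [← Polynomial.natDegree_mul hf0 hg0, ← hfg, hd]
    rcases Nat.eq_zero_or_pos f.natDegree with h0 | hpos
    · exact Or.inl (key f g hfg h0)
    · exact Or.inr (key g f (by rw [hfg, mul_comm]) (by omega))

/-- Every common divisor of `X 0` and `X 1 * X 2` is a unit. -/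
lemma BlockPrime.aux_coprime {F : Type*} [Field F] (c : MvPolynomial (Fin 3) F)
    (h1 : c ∣ X 0) (h2 : c ∣ X 1 * X 2) : IsUnit c := by
  have hX0 : Prime (X 0 : MvPolynomial (Fin 3) F) := by
    have h : Prime ((finSuccEquiv F 2) (X 0)) := by
      rw [finSuccEquiv_X_zero]; exact Polynomial.prime_X
    exact (MulEquiv.prime_iff (finSuccEquiv F 2)).mp h
  obtain ⟨d, hd⟩ := h1
  rcases hX0.irreducible.isUnit_or_isUnit hd with hc | hdu
  · exact hc
  · exfalso
    obtain ⟨u, rfl⟩ := hdu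
    have hxc : (X 0 : MvPolynomial (Fin 3) F) ∣ c :=
      ⟨↑u⁻¹, by rw [hd]; exact (Units.mul_inv_cancel_right c u).symm⟩
    rcases hX0.2.2 _ _ (hxc.trans h2) with hx | hx <;>
    · have := map_dvd (eval (fun i : Fin 3 => if i = 0 then (0 : F) else 1)) hx
      simp at this

/-- An explicit bijection between the four variables of the `2 × 2` block and
`Option (Fin 3)`, sending `(0,0)` to `none`. -/
def BlockPrime.vEquiv : Fin 2 × Fin 2 ≃ Option (Fin 3) where
  toFun p := if p = (0,0) then none else if p = (1,1) then some 0
    else if p = (0,1) then some 1 else some 2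
  invFun o := o.elim (0,0) (fun i => if i = 0 then (1,1) else if i = 1 then (0,1) else (1,0))
  left_inv := by decide
  right_inv := by decide

/-- The `2 × 2` permanent is a prime element of the polynomial ring in four variables. -/
lemma BlockPrime.prime_q {F : Type*} [Field F] :
    Prime (X (0,0) * X (1,1) + X (0,1) * X (1,0) : MvPolynomial (Fin 2 × Fin 2) F) := by
  set ε := (renameEquiv F BlockPrime.vEquiv).trans (optionEquivLeft F (Fin 3)) with hε
  have himg : ε (X (0,0) * X (1,1) + X (0,1) * X (1,0)) =
      Polynomial.C (X 0) * Polynomial.X + Polynomial.C (X 1 * X 2) := by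
    have h00 : BlockPrime.vEquiv (0,0) = none := by decide
    have h11 : BlockPrime.vEquiv (1,1) = some 0 := by decide
    have h01 : BlockPrime.vEquiv (0,1) = some 1 := by decide
    have h10 : BlockPrime.vEquiv (1,0) = some 2 := by decide
    have h00' : BlockPrime.vEquiv 0 = none := by decide
    have h11' : BlockPrime.vEquiv 1 = some 0 := by decide
    simp [hε, renameEquiv_apply, rename_X, h00, h11, h01, h10, h00', h11',
      optionEquivLeft_X_none, optionEquivLeft_X_some, map_mul]
  have hirr : Irreducible (ε (X (0,0) * X (1,1) + X (0,1) * X (1,0) :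
      MvPolynomial (Fin 2 × Fin 2) F)) := by
    rw [himg]
    exact BlockPrime.irreducible_linear (X_ne_zero 0)
      (fun c hc1 hc2 => BlockPrime.aux_coprime c hc1 hc2)
  have hirr' : Irreducible
      (X (0,0) * X (1,1) + X (0,1) * X (1,0) : MvPolynomial (Fin 2 × Fin 2) F) :=
    (MulEquiv.irreducible_iff ε.toMulEquiv).mp hirr
  exact UniqueFactorizationMonoid.irreducible_iff_prime.mp hirr'

/-- The embedding of the index set of the upper-left `2 × 2` block into that of the
full `3 × 3` matrix. -/
noncomputable def BlockPrime.eemb : Fin 2 × Fin 2 → Fin 3 × Fin 3 :=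
  fun p => (p.1.castLE (by omega), p.2.castLE (by omega))

lemma BlockPrime.eemb_inj : Function.Injective BlockPrime.eemb := by decide

/-- The ideal `P` is prime. -/
lemma BlockPrime.prime_part (F : Type*) [Field F] :
    (Ideal.span ({X (0, 0) * X (1, 1) + X (0, 1) * X (1, 0),
        X (0, 2), X (1, 2), X (2, 0), X (2, 1), X (2, 2)} :
        Set (MvPolynomial (Fin 3 × Fin 3) F))).IsPrime := by
  have hq : Prime (X (0,0) * X (1,1) + X (0,1) * X (1,0) :
      MvPolynomial (Fin 2 × Fin 2) F) := BlockPrime.prime_q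
  set q : MvPolynomial (Fin 2 × Fin 2) F := X (0,0) * X (1,1) + X (0,1) * X (1,0) with hqdef
  set P : Ideal (MvPolynomial (Fin 3 × Fin 3) F) :=
    Ideal.span ({X (0, 0) * X (1, 1) + X (0, 1) * X (1, 0),
        X (0, 2), X (1, 2), X (2, 0), X (2, 1), X (2, 2)} :
        Set (MvPolynomial (Fin 3 × Fin 3) F)) with hPdef
  have hI : (Ideal.span {q}).IsPrime := (Ideal.span_singleton_prime hq.ne_zero).mpr hq
  haveI := hI
  set κ : MvPolynomial (Fin 3 × Fin 3) F →ₐ[F] MvPolynomial (Fin 2 × Fin 2) F :=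
    killCompl BlockPrime.eemb_inj with hκdef
  set φ : MvPolynomial (Fin 3 × Fin 3) F →+* MvPolynomial (Fin 2 × Fin 2) F ⧸ Ideal.span {q} :=
    (Ideal.Quotient.mk (Ideal.span {q})).comp κ.toRingHom with hφdef
  have hκe : ∀ a : Fin 2 × Fin 2, κ (X (BlockPrime.eemb a)) = X a := by
    intro a; rw [hκdef, ← rename_X, killCompl_rename_app]
  have hκ0 : ∀ v : Fin 3 × Fin 3, v ∉ Set.range BlockPrime.eemb → κ (X v) = 0 := by
    intro v hv; rw [hκdef, killCompl, aeval_X, dif_neg hv]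
  have hXP : ∀ v : Fin 3 × Fin 3, v ∉ Set.range BlockPrime.eemb → X v ∈ P := by
    intro v hv
    have cov : ∀ w : Fin 3 × Fin 3, (¬ ∃ a, BlockPrime.eemb a = w) →
        (w = (0,2) ∨ w = (1,2) ∨ w = (2,0) ∨ w = (2,1) ∨ w = (2,2)) := by decide
    rcases cov v hv with rfl | rfl | rfl | rfl | rfl <;>
      exact Ideal.subset_span (by simp)
  have main : ∀ f : MvPolynomial (Fin 3 × Fin 3) F,
      f - rename BlockPrime.eemb (κ f) ∈ P := by
    intro f
    induction f using MvPolynomial.induction_on with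
    | C a =>
        rw [show κ (C a) = C a from κ.commutes' a ▸ by simp [hκdef, killCompl_C]]
        rw [rename_C, sub_self]; exact Ideal.zero_mem _
    | add p r hp hr =>
        have : (p + r) - rename BlockPrime.eemb (κ (p + r)) =
            (p - rename BlockPrime.eemb (κ p)) + (r - rename BlockPrime.eemb (κ r)) := by
          rw [map_add, map_add]; ring
        rw [this]; exact Ideal.add_mem _ hp hr
    | mul_X p n hp =>
        by_cases hn : n ∈ Set.range BlockPrime.eemb
        · obtain ⟨a, rfl⟩ := hn
          have : p * X (BlockPrime.eemb a) - rename BlockPrime.eemb (κ (p * X (BlockPrime.eemb a))) =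
              (p - rename BlockPrime.eemb (κ p)) * X (BlockPrime.eemb a) := by
            rw [map_mul, hκe a, map_mul, rename_X]; ring
          rw [this]; exact Ideal.mul_mem_right _ _ hp
        · rw [map_mul, hκ0 n hn, mul_zero, map_zero, sub_zero]
          exact Ideal.mul_mem_left _ _ (hXP n hn)
  have hren_q : rename BlockPrime.eemb q = X (0,0) * X (1,1) + X (0,1) * X (1,0) := by
    have h1 : BlockPrime.eemb (0,0) = (0,0) := by decide
    have h2 : BlockPrime.eemb (1,1) = (1,1) := by decide
    have h3 : BlockPrime.eemb (0,1) = (0,1) := by decide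
    have h4 : BlockPrime.eemb (1,0) = (1,0) := by decide
    rw [hqdef, map_add, map_mul, map_mul, rename_X, rename_X, rename_X, rename_X,
      h1, h2, h3, h4]
  have hker : RingHom.ker φ = P := by
    apply le_antisymm
    · intro f hf
      have hf' : κ f ∈ Ideal.span {q} := by
        rwa [RingHom.mem_ker, hφdef, RingHom.comp_apply, Ideal.Quotient.eq_zero_iff_mem] at hf
      obtain ⟨cc, hcc⟩ := Ideal.mem_span_singleton'.mp hf'
      have h1 : rename BlockPrime.eemb (κ f) ∈ P := by
        rw [← hcc, map_mul, hren_q]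
        exact Ideal.mul_mem_left _ _ (Ideal.subset_span (by simp))
      have h2 := main f
      have h3 : f = (f - rename BlockPrime.eemb (κ f)) + rename BlockPrime.eemb (κ f) := by
        ring
      rw [h3]; exact Ideal.add_mem _ h2 h1
    · rw [hPdef, Ideal.span_le]
      intro x hx
      simp only [Set.mem_insert_iff, Set.mem_singleton_iff] at hx
      have hmem : ∀ y : MvPolynomial (Fin 3 × Fin 3) F, κ y ∈ Ideal.span {q} →
          x = y → x ∈ RingHom.ker φ := by
        rintro y hy rfl
        rw [RingHom.mem_ker, hφdef, RingHom.comp_apply]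
        exact Ideal.Quotient.eq_zero_iff_mem.mpr hy
      rcases hx with rfl | rfl | rfl | rfl | rfl | rfl
      · refine hmem _ ?_ rfl
        have e1 : ((0,0) : Fin 3 × Fin 3) = BlockPrime.eemb (0,0) := by decide
        have e2 : ((1,1) : Fin 3 × Fin 3) = BlockPrime.eemb (1,1) := by decide
        have e3 : ((0,1) : Fin 3 × Fin 3) = BlockPrime.eemb (0,1) := by decide
        have e4 : ((1,0) : Fin 3 × Fin 3) = BlockPrime.eemb (1,0) := by decide
        rw [e1, e2, e3, e4, map_add, map_mul, map_mul, hκe, hκe, hκe, hκe]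
        exact Ideal.subset_span rfl
      all_goals refine hmem _ ?_ rfl
      all_goals rw [hκ0 _ (by rw [Set.mem_range]; decide)]
      all_goals exact Ideal.zero_mem _
  have := RingHom.ker_isPrime φ
  rwa [hker] at this

set_option maxHeartbeats 1000000 in
/-- `M` is the generic 3×3 matrix with entries `x_{ij} = X (i,j)` and `P₂(M)`
is generated by all 2×2 subpermanents.  The ideal `P` generated by the
permanent `x₁₁x₂₂ + x₁₂x₂₁` of the upper-left 2×2 block together with the five
entries `x₁₃, x₂₃, x₃₁, x₃₂, x₃₃` outside that block is a prime ideal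
containing `P₂(M)`. -/
theorem block_prime_contains_permanental (F : Type*) [Field F] (h2 : (2 : F) ≠ 0) :
    (Ideal.span ({X (0, 0) * X (1, 1) + X (0, 1) * X (1, 0),
        X (0, 2), X (1, 2), X (2, 0), X (2, 1), X (2, 2)} :
        Set (MvPolynomial (Fin 3 × Fin 3) F))).IsPrime ∧
    Ideal.span {f : MvPolynomial (Fin 3 × Fin 3) F |
        ∃ i k j l : Fin 3, i < k ∧ j < l ∧
          f = X (i, j) * X (k, l) + X (k, j) * X (i, l)} ≤
      Ideal.span ({X (0, 0) * X (1, 1) + X (0, 1) * X (1, 0),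
        X (0, 2), X (1, 2), X (2, 0), X (2, 1), X (2, 2)} :
        Set (MvPolynomial (Fin 3 × Fin 3) F)) := by
  constructor
  · exact BlockPrime.prime_part F
  · rw [Ideal.span_le]
    rintro f ⟨i, k, j, l, hik, hjl, rfl⟩
    have cov : ∀ a b : Fin 3, a < b →
        (a = 0 ∧ b = 1 ∨ a = 0 ∧ b = 2 ∨ a = 1 ∧ b = 2) := by decide
    rcases cov i k hik with ⟨rfl, rfl⟩ | ⟨rfl, rfl⟩ | ⟨rfl, rfl⟩ <;>
      rcases cov j l hjl with ⟨rfl, rfl⟩ | ⟨rfl, rfl⟩ | ⟨rfl, rfl⟩ <;>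
      first
        | (refine Ideal.add_mem _ (Ideal.mul_mem_left _ _ (Ideal.subset_span ?_))
              (Ideal.mul_mem_left _ _ (Ideal.subset_span ?_)) <;> (simp; done))
        | (refine Ideal.add_mem _ (Ideal.mul_mem_left _ _ (Ideal.subset_span ?_))
              (Ideal.mul_mem_right _ _ (Ideal.subset_span ?_)) <;> (simp; done))
        | (refine Ideal.subset_span (Set.mem_insert_iff.mpr (Or.inl ?_)); ring)
end

section
/- Let R be a commutative ring and let I_1,...,I_l and J_1,...,J_l be ideals of R such that I_i ⊆ J_j whenever i ≠ j. Then ⋂_{i=1}^l (I_i + J_i) = I_1 + ... + I_l + ⋂_{i=1}^l J_i. -/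
/-! Two applications of the modular law give
`(a ⊔ b) ⊓ (c ⊔ d) = a ⊔ c ⊔ (b ⊓ d)` whenever `c ≤ b` and `a ≤ d`. Peeling off one index at a
time, with `a = I i`, `b = J i`, `c = ⨆_{j ≠ i} I j` and `d = ⨅_{j ≠ i} J j`, this yields the
lemma in every modular lattice, in particular for ideals. -/

section ModularLattice

variable {α : Type*} [Lattice α] [IsModularLattice α]

theorem sup_inf_sup_eq_of_le {a b c d : α} (hcb : c ≤ b) (had : a ≤ d) :
    (a ⊔ b) ⊓ (c ⊔ d) = a ⊔ c ⊔ b ⊓ d := by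
  rw [sup_inf_assoc_of_le b (le_sup_of_le_right had), inf_comm, sup_inf_assoc_of_le d hcb,
    sup_assoc, inf_comm]

theorem Finset.inf_sup_eq_sup_sup_inf [BoundedOrder α] {ι : Type*} [DecidableEq ι]
    (f g : ι → α) (s : Finset ι) (h : ∀ i ∈ s, ∀ j ∈ s, i ≠ j → f i ≤ g j) :
    s.inf (fun i => f i ⊔ g i) = s.sup f ⊔ s.inf g := by
  induction s using Finset.induction_on with
  | empty => simp
  | @insert a s ha ih =>
    have hs : ∀ i ∈ s, ∀ j ∈ s, i ≠ j → f i ≤ g j := fun i hi j hj =>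
      h i (mem_insert_of_mem hi) j (mem_insert_of_mem hj)
    have hsup : s.sup f ≤ g a := Finset.sup_le fun i hi =>
      h i (mem_insert_of_mem hi) a (mem_insert_self a s) (ne_of_mem_of_not_mem hi ha)
    have hinf : f a ≤ s.inf g := Finset.le_inf fun j hj =>
      h a (mem_insert_self a s) j (mem_insert_of_mem hj) (ne_of_mem_of_not_mem hj ha).symm
    rw [inf_insert, inf_insert, sup_insert, ih hs, sup_inf_sup_eq_of_le hsup hinf]

end ModularLattice

/-- Niermann's lemma: if `I i ⊆ J j` for all `i ≠ j`, then
`⋂ i (I i + J i) = (∑ i, I i) + ⋂ i, J i`. -/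
theorem niermann_lemma {R : Type*} [CommRing R] (l : ℕ)
    (I J : Fin l → Ideal R) (h : ∀ i j, i ≠ j → I i ≤ J j) :
    ⨅ i, (I i + J i) = (∑ i, I i) + ⨅ i, J i := by
  simpa only [Ideal.add_eq_sup, Ideal.sum_eq_sup, Finset.inf_eq_iInf, Finset.mem_univ,
    iInf_true] using Finset.inf_sup_eq_sup_sup_inf I J Finset.univ fun i _ j _ => h i j
end

section
/- Let R be a commutative ring and let I_1, I_2, J_1, J_2 be ideals of R with I_1 ⊆ J_2 and I_2 ⊆ J_1. Then (I_1 + J_1) ∩ (I_2 + J_2) = I_1 + I_2 + (J_1 ∩ J_2). -/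
/-! The identity holds in any modular lattice, and ideals form one. Each inclusion lets the
modular law pull one summand out of the intersection: `I₁ ≤ I₂ + J₂` gives
`(I₁ + J₁) ⊓ (I₂ + J₂) = I₁ + J₁ ⊓ (I₂ + J₂)`, and `I₂ ≤ J₁` gives
`J₁ ⊓ (I₂ + J₂) = I₂ + J₁ ⊓ J₂`. -/

theorem sup_inf_sup_eq_of_le_of_le {α : Type*} [Lattice α] [IsModularLattice α]
    {a₁ a₂ b₁ b₂ : α} (h₁ : a₁ ≤ b₂) (h₂ : a₂ ≤ b₁) :
    (a₁ ⊔ b₁) ⊓ (a₂ ⊔ b₂) = a₁ ⊔ a₂ ⊔ b₁ ⊓ b₂ :=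
  calc (a₁ ⊔ b₁) ⊓ (a₂ ⊔ b₂) = a₁ ⊔ b₁ ⊓ (a₂ ⊔ b₂) :=
        sup_inf_assoc_of_le b₁ (h₁.trans le_sup_right)
    _ = a₁ ⊔ (a₂ ⊔ b₂ ⊓ b₁) := by rw [inf_comm, sup_inf_assoc_of_le b₂ h₂]
    _ = a₁ ⊔ a₂ ⊔ b₁ ⊓ b₂ := by rw [inf_comm, sup_assoc]

/-- The `l = 2` case of Niermann's lemma: if `I₁ ⊆ J₂` and `I₂ ⊆ J₁`, then
`(I₁ + J₁) ∩ (I₂ + J₂) = I₁ + I₂ + (J₁ ∩ J₂)`. -/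
theorem niermann_lemma_two {R : Type*} [CommRing R]
    (I₁ I₂ J₁ J₂ : Ideal R) (h1 : I₁ ≤ J₂) (h2 : I₂ ≤ J₁) :
    (I₁ + J₁) ⊓ (I₂ + J₂) = I₁ + I₂ + (J₁ ⊓ J₂) := by
  simp only [Submodule.add_eq_sup]
  exact sup_inf_sup_eq_of_le_of_le h1 h2
end

section
/- Let F be a field of characteristic not 2 and let M be the generic 2×n matrix (n ≥ 3) with entries x_{ij} over R = F[x_{ij}]. Then the ideal generated by all products of two entries from distinct rows, ⟨x_{1j}x_{2k} : 1 ≤ j,k ≤ n⟩, intersected with the ideal generated by all products x_{1p}x_{iq}x_{jr} taken from three distinct columns p,q,r, is contained in P_2(M). -/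
open MvPolynomial

private noncomputable def P2aux (F : Type*) [Field F] (n : ℕ) : Ideal (MvPolynomial (Fin 2 × Fin n) F) :=
  Ideal.span {f | ∃ j l : Fin n, j < l ∧ f = X (0, j) * X (1, l) + X (1, j) * X (0, l)}

private lemma gmem {F : Type*} [Field F] {n : ℕ} (a b : Fin n) (hab : a ≠ b) :
    X (0, a) * X (1, b) + X (1, a) * X (0, b) ∈ P2aux F n := by
  rcases lt_or_gt_of_ne hab with h | h
  · exact Ideal.subset_span ⟨a, b, h, rfl⟩
  · exact Ideal.subset_span ⟨b, a, h, by ring⟩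

private lemma keymem {F : Type*} [Field F] (h2 : (2 : F) ≠ 0) {n : ℕ} {a b c : Fin n}
    (hab : a ≠ b) (hbc : b ≠ c) (hac : a ≠ c) (r : Fin 2) :
    X (0, a) * X (1, b) * X (r, c) ∈ P2aux F n := by
  have hC : (C (2 : F) : MvPolynomial (Fin 2 × Fin n) F) = 2 := by
    rw [map_ofNat]
  have hCC : (C ((2 : F)⁻¹) : MvPolynomial (Fin 2 × Fin n) F) * C (2 : F) = 1 := by
    rw [← C_mul, inv_mul_cancel₀ h2, C_1]
  have hr : r = 0 ∨ r = 1 := by omega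
  rcases hr with rfl | rfl
  · have key : X (0, a) * X (1, b) * X ((0 : Fin 2), c)
        = C ((2 : F)⁻¹) * (X (0, a) * (X (0, b) * X (1, c) + X (1, b) * X (0, c))
            - X (0, b) * (X (0, a) * X (1, c) + X (1, a) * X (0, c))
            + X (0, c) * (X (0, a) * X (1, b) + X (1, a) * X (0, b))) := by
      have h : (X (0, a) * (X (0, b) * X (1, c) + X (1, b) * X (0, c))
            - X (0, b) * (X (0, a) * X (1, c) + X (1, a) * X (0, c))
            + X (0, c) * (X (0, a) * X (1, b) + X (1, a) * X (0, b)))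
          = C (2 : F) * (X (0, a) * X (1, b) * X ((0 : Fin 2), c)) := by
        rw [hC]; ring
      rw [h, ← mul_assoc, hCC, one_mul]
    rw [key]
    exact Ideal.mul_mem_left _ _ (add_mem (sub_mem
      (Ideal.mul_mem_left _ _ (gmem b c hbc)) (Ideal.mul_mem_left _ _ (gmem a c hac)))
      (Ideal.mul_mem_left _ _ (gmem a b hab)))
  · have key : X (0, a) * X (1, b) * X ((1 : Fin 2), c)
        = C ((2 : F)⁻¹) * (X (1, c) * (X (0, a) * X (1, b) + X (1, a) * X (0, b))
            - X (1, a) * (X (0, b) * X (1, c) + X (1, b) * X (0, c))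
            + X (1, b) * (X (0, a) * X (1, c) + X (1, a) * X (0, c))) := by
      have h : (X (1, c) * (X (0, a) * X (1, b) + X (1, a) * X (0, b))
            - X (1, a) * (X (0, b) * X (1, c) + X (1, b) * X (0, c))
            + X (1, b) * (X (0, a) * X (1, c) + X (1, a) * X (0, c)))
          = C (2 : F) * (X (0, a) * X (1, b) * X ((1 : Fin 2), c)) := by
        rw [hC]; ring
      rw [h, ← mul_assoc, hCC, one_mul]
    rw [key]
    exact Ideal.mul_mem_left _ _ (add_mem (sub_mem
      (Ideal.mul_mem_left _ _ (gmem a b hab)) (Ideal.mul_mem_left _ _ (gmem b c hbc)))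
      (Ideal.mul_mem_left _ _ (gmem a c hac)))

private lemma pick_col {α : Type*} {P : α → Prop} {p q r : α} (hpq : p ≠ q) (hqr : q ≠ r)
    (hpr : p ≠ r) (hP : P p) (hQ : P q) (hR : P r) (j k : α) :
    ∃ c, P c ∧ c ≠ j ∧ c ≠ k := by
  by_cases h1 : p ≠ j ∧ p ≠ k
  · exact ⟨p, hP, h1.1, h1.2⟩
  by_cases h2 : q ≠ j ∧ q ≠ k
  · exact ⟨q, hQ, h2.1, h2.2⟩
  rw [not_and_or, not_ne_iff, not_ne_iff] at h1 h2
  refine ⟨r, hR, ?_, ?_⟩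
  · rintro rfl
    rcases h1 with h1 | h1 <;> rcases h2 with h2 | h2 <;> simp_all
  · rintro rfl
    rcases h1 with h1 | h1 <;> rcases h2 with h2 | h2 <;> simp_all

private lemma pick {n : ℕ} (d : (Fin 2 × Fin n) →₀ ℕ) {j k p q r : Fin n} {i₁ i₂ i₃ : Fin 2}
    (hpq : p ≠ q) (hqr : q ≠ r) (hpr : p ≠ r)
    (hj : 1 ≤ d (0, j)) (hk : 1 ≤ d (1, k))
    (hp : 1 ≤ d (i₁, p)) (hq : 1 ≤ d (i₂, q)) (hr : 1 ≤ d (i₃, r)) :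
    ∃ (a b c : Fin n) (r' : Fin 2), a ≠ b ∧ b ≠ c ∧ a ≠ c ∧
      1 ≤ d (0, a) ∧ 1 ≤ d (1, b) ∧ 1 ≤ d (r', c) := by
  obtain ⟨a, b, hab, ha, hb⟩ : ∃ a b, a ≠ b ∧ 1 ≤ d (0, a) ∧ 1 ≤ d (1, b) := by
    rcases eq_or_ne j k with rfl | hjk
    · obtain ⟨c₁, ⟨i, hi⟩, hc₁j, -⟩ :=
        pick_col (P := fun c => ∃ i, 1 ≤ d (i, c)) hpq hqr hpr ⟨i₁, hp⟩ ⟨i₂, hq⟩ ⟨i₃, hr⟩ j j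
      have : i = 0 ∨ i = 1 := by omega
      rcases this with rfl | rfl
      · exact ⟨c₁, j, hc₁j, hi, hk⟩
      · exact ⟨j, c₁, (Ne.symm hc₁j), hj, hi⟩
    · exact ⟨j, k, hjk, hj, hk⟩
  obtain ⟨c, ⟨i, hi⟩, hca, hcb⟩ :=
    pick_col (P := fun c => ∃ i, 1 ≤ d (i, c)) hpq hqr hpr ⟨i₁, hp⟩ ⟨i₂, hq⟩ ⟨i₃, hr⟩ a b
  exact ⟨a, b, c, i, hab, Ne.symm hcb, Ne.symm hca, ha, hb, hi⟩

/-- `M` is the generic 2×n matrix (n ≥ 3) with entries `x_{ij} = X (i,j)`.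
The intersection of the ideal generated by all products of two entries from
the two distinct rows with the ideal generated by all products of three
entries from three distinct columns is contained in `P₂(M)`, the ideal of
2×2 subpermanents. -/
theorem inf_le_permanental_two_rows (F : Type*) [Field F] (h2 : (2 : F) ≠ 0)
    (n : ℕ) (hn : 3 ≤ n) :
    Ideal.span {f : MvPolynomial (Fin 2 × Fin n) F |
        ∃ j k : Fin n, f = X (0, j) * X (1, k)} ⊓
      Ideal.span {f : MvPolynomial (Fin 2 × Fin n) F |
        ∃ (i₁ i₂ i₃ : Fin 2) (p q r : Fin n), p ≠ q ∧ q ≠ r ∧ p ≠ r ∧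
          f = X (i₁, p) * X (i₂, q) * X (i₃, r)} ≤
    Ideal.span {f : MvPolynomial (Fin 2 × Fin n) F |
        ∃ j l : Fin n, j < l ∧
          f = X (0, j) * X (1, l) + X (1, j) * X (0, l)} := by
  have hmon : ∀ s : Fin 2 × Fin n, (X s : MvPolynomial (Fin 2 × Fin n) F)
      = monomial (Finsupp.single s 1) 1 := fun s => by
    rw [← X_pow_eq_monomial, pow_one]
  have eA : {f : MvPolynomial (Fin 2 × Fin n) F | ∃ j k : Fin n, f = X (0, j) * X (1, k)}
      = (fun e => monomial e (1 : F)) ''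
        {e | ∃ j k : Fin n, e = Finsupp.single ((0 : Fin 2), j) 1 + Finsupp.single (1, k) 1} := by
    ext f
    constructor
    · rintro ⟨j, k, rfl⟩
      exact ⟨_, ⟨j, k, rfl⟩, by rw [hmon, hmon, monomial_mul, one_mul]⟩
    · rintro ⟨e, ⟨j, k, rfl⟩, rfl⟩
      exact ⟨j, k, by rw [hmon, hmon, monomial_mul, one_mul]⟩
  have eB : {f : MvPolynomial (Fin 2 × Fin n) F |
        ∃ (i₁ i₂ i₃ : Fin 2) (p q r : Fin n), p ≠ q ∧ q ≠ r ∧ p ≠ r ∧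
          f = X (i₁, p) * X (i₂, q) * X (i₃, r)}
      = (fun e => monomial e (1 : F)) ''
        {e | ∃ (i₁ i₂ i₃ : Fin 2) (p q r : Fin n), p ≠ q ∧ q ≠ r ∧ p ≠ r ∧
          e = Finsupp.single (i₁, p) 1 + Finsupp.single (i₂, q) 1 + Finsupp.single (i₃, r) 1} := by
    ext f
    constructor
    · rintro ⟨i₁, i₂, i₃, p, q, r, h1, h3, h4, rfl⟩
      exact ⟨_, ⟨i₁, i₂, i₃, p, q, r, h1, h3, h4, rfl⟩, by
        rw [hmon, hmon, hmon, monomial_mul, monomial_mul, one_mul, one_mul]⟩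
    · rintro ⟨e, ⟨i₁, i₂, i₃, p, q, r, h1, h3, h4, rfl⟩, rfl⟩
      exact ⟨i₁, i₂, i₃, p, q, r, h1, h3, h4, by
        rw [hmon, hmon, hmon, monomial_mul, monomial_mul, one_mul, one_mul]⟩
  rintro f ⟨hfA, hfB⟩
  rw [eA] at hfA
  rw [eB] at hfB
  replace hfA := mem_ideal_span_monomial_image.mp hfA
  replace hfB := mem_ideal_span_monomial_image.mp hfB
  show f ∈ P2aux F n
  rw [← support_sum_monomial_coeff f]
  refine Ideal.sum_mem _ fun d hd => ?_
  obtain ⟨eA', ⟨j, k, rfl⟩, hleA⟩ := hfA d hd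
  obtain ⟨eB', ⟨i₁, i₂, i₃, p, q, r, hpq, hqr, hpr, rfl⟩, hleB⟩ := hfB d hd
  rw [Finsupp.le_def] at hleA hleB
  have hne0 : ((1, k) : Fin 2 × Fin n) ≠ (0, j) := by simp [Prod.ext_iff]
  have hne0' : ((0, j) : Fin 2 × Fin n) ≠ (1, k) := by simp [Prod.ext_iff]
  have hj : 1 ≤ d (0, j) := by
    have := hleA (0, j)
    simpa [Finsupp.single_apply, hne0] using this
  have hk : 1 ≤ d (1, k) := by
    have := hleA (1, k)
    simpa [Finsupp.single_apply, hne0'] using this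
  have hp : 1 ≤ d (i₁, p) := by
    have := hleB (i₁, p)
    simpa [Finsupp.single_apply, Prod.ext_iff, Ne.symm hpq, Ne.symm hpr] using this
  have hq : 1 ≤ d (i₂, q) := by
    have := hleB (i₂, q)
    simpa [Finsupp.single_apply, Prod.ext_iff, hpq, Ne.symm hqr] using this
  have hr : 1 ≤ d (i₃, r) := by
    have := hleB (i₃, r)
    simpa [Finsupp.single_apply, Prod.ext_iff, hpr, hqr] using this
  obtain ⟨a, b, c, r', hab, hbc, hac, ha, hb, hc⟩ := pick d hpq hqr hpr hj hk hp hq hr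
  set e : (Fin 2 × Fin n) →₀ ℕ :=
    Finsupp.single (0, a) 1 + Finsupp.single (1, b) 1 + Finsupp.single (r', c) 1 with he
  have hnab : ((0, a) : Fin 2 × Fin n) ≠ (1, b) := by simp [Prod.ext_iff]
  have hnac : ((0, a) : Fin 2 × Fin n) ≠ (r', c) := by simp [Prod.ext_iff, hac]
  have hnbc : ((1, b) : Fin 2 × Fin n) ≠ (r', c) := by simp [Prod.ext_iff, hbc]
  have hle : e ≤ d := by
    rw [Finsupp.le_def]
    intro s
    rcases eq_or_ne s (0, a) with rfl | h1
    · simpa [he, Finsupp.single_apply, Ne.symm hnab, hnac, Ne.symm hnac] using ha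
    rcases eq_or_ne s (1, b) with rfl | hB
    · simpa [he, Finsupp.single_apply, hnab, hnbc, Ne.symm hnbc] using hb
    rcases eq_or_ne s (r', c) with rfl | hC
    · simpa [he, Finsupp.single_apply, hnac, hnbc] using hc
    simp [he, Finsupp.single_apply, Ne.symm h1, Ne.symm hB, Ne.symm hC]
  have hsplit : (monomial d (coeff d f) : MvPolynomial (Fin 2 × Fin n) F)
      = C (coeff d f) * (X (0, a) * X (1, b) * X (r', c)) * monomial (d - e) 1 := by
    rw [hmon, hmon, hmon, monomial_mul, monomial_mul, one_mul, one_mul, ← he,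
      C_mul_monomial, monomial_mul, add_tsub_cancel_of_le hle, mul_one, mul_one]
  rw [hsplit]
  exact Ideal.mul_mem_right _ _ (Ideal.mul_mem_left _ _ (keymem h2 hab hbc hac r'))
end

section
/- Let F be a field of characteristic not 2 and let M = [[a,b,c],[x,y,z],[u,v,w]] be the generic 3×3 matrix over R. Then every monomial of the form e₁·e₂·e₃ where e₁, e₂, e₃ are entries of M lying in three distinct rows and three distinct columns satisfies (e₁e₂e₃)² ∈ P_2(M); in particular the radical of P_2(M) contains all such monomials. -/
/-!
Write `a, b, c` for the diagonal entries of a 3×3 matrix. Then `2 (abc)²` is an explicit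
combination of five 2×2 subpermanents, in which every mixed monomial occurs in two consecutive
terms with opposite signs; as `2` is invertible, `(abc)² ∈ P₂`. Any product of entries from
distinct rows and columns is the diagonal product of a column permutation of the matrix, whose
subpermanents are among the original ones.
-/

open MvPolynomial

namespace Matrix

variable {m n R : Type*} [LinearOrder m] [LinearOrder n] [CommRing R]

/-- The ideal `P₂(A)` of 2×2 subpermanents. -/
def subpermanentIdeal (A : Matrix m n R) : Ideal R :=
  Ideal.span {f | ∃ i k j l, i < k ∧ j < l ∧ f = A i j * A k l + A k j * A i l}

theorem subpermanent_mem_subpermanentIdeal (A : Matrix m n R) {i k : m} {j l : n}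
    (hik : i ≠ k) (hjl : j ≠ l) :
    A i j * A k l + A k j * A i l ∈ subpermanentIdeal A := by
  apply Ideal.subset_span
  rcases hik.lt_or_gt with hik | hik <;> rcases hjl.lt_or_gt with hjl | hjl
  · exact ⟨i, k, j, l, hik, hjl, rfl⟩
  · exact ⟨i, k, l, j, hik, hjl, by ring⟩
  · exact ⟨k, i, j, l, hik, hjl, by ring⟩
  · exact ⟨k, i, l, j, hik, hjl, by ring⟩

theorem subpermanentIdeal_submatrix_le {m' n' : Type*} [LinearOrder m'] [LinearOrder n']
    (A : Matrix m n R) {r : m' → m} {c : n' → n} (hr : r.Injective) (hc : c.Injective) :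
    subpermanentIdeal (A.submatrix r c) ≤ subpermanentIdeal A := by
  refine Ideal.span_le.mpr ?_
  rintro _ ⟨i, k, j, l, hik, hjl, rfl⟩
  exact subpermanent_mem_subpermanentIdeal A (hr.ne hik.ne) (hc.ne hjl.ne)

theorem two_mul_diag_prod_sq_mem_subpermanentIdeal (A : Matrix (Fin 3) (Fin 3) R) :
    2 * (∏ i, A i i) ^ 2 ∈ subpermanentIdeal A := by
  have perm_mem {i k j l : Fin 3} (hik : i ≠ k := by decide) (hjl : j ≠ l := by decide) :=
    subpermanent_mem_subpermanentIdeal A hik hjl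
  have key : 2 * (∏ i, A i i) ^ 2 =
      A 0 0 * A 1 1 * A 2 2 ^ 2 * (A 0 0 * A 1 1 + A 1 0 * A 0 1)
      - A 0 0 * A 1 0 * A 1 1 * A 2 2 * (A 0 1 * A 2 2 + A 2 1 * A 0 2)
      + A 0 0 * A 0 2 * A 1 1 * A 2 1 * (A 1 0 * A 2 2 + A 2 0 * A 1 2)
      - A 0 0 * A 1 1 * A 1 2 * A 2 1 * (A 0 0 * A 2 2 + A 2 0 * A 0 2)
      + A 0 0 ^ 2 * A 1 1 * A 2 2 * (A 1 1 * A 2 2 + A 2 1 * A 1 2) := by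
    rw [Fin.prod_univ_three]; ring
  rw [key]
  refine add_mem (sub_mem (add_mem (sub_mem ?_ ?_) ?_) ?_) ?_ <;>
    exact Ideal.mul_mem_left _ _ perm_mem

theorem diag_prod_sq_mem_subpermanentIdeal (A : Matrix (Fin 3) (Fin 3) R) (h2 : IsUnit (2 : R)) :
    (∏ i, A i i) ^ 2 ∈ subpermanentIdeal A :=
  (Submodule.smul_mem_iff_of_isUnit _ h2).mp (two_mul_diag_prod_sq_mem_subpermanentIdeal A)

end Matrix

/-- `M` is the generic 3×3 matrix with entries `X (i,j)`.  For every
permutation `σ` of `{0,1,2}`, the product `∏ i, X (i, σ i)` of entries from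
three distinct rows and three distinct columns has its square in `P₂(M)`, the
ideal of 2×2 subpermanents; in particular this product lies in the radical
of `P₂(M)`. -/
theorem antidiagonal_products_sq_mem (F : Type*) [Field F] (h2 : (2 : F) ≠ 0)
    (σ : Equiv.Perm (Fin 3)) :
    (∏ i : Fin 3, X (i, σ i) : MvPolynomial (Fin 3 × Fin 3) F) ^ 2 ∈
      Ideal.span {f : MvPolynomial (Fin 3 × Fin 3) F |
        ∃ i k j l : Fin 3, i < k ∧ j < l ∧
          f = X (i, j) * X (k, l) + X (k, j) * X (i, l)} ∧
    (∏ i : Fin 3, X (i, σ i) : MvPolynomial (Fin 3 × Fin 3) F) ∈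
      (Ideal.span {f : MvPolynomial (Fin 3 × Fin 3) F |
        ∃ i k j l : Fin 3, i < k ∧ j < l ∧
          f = X (i, j) * X (k, l) + X (k, j) * X (i, l)}).radical := by
  let M : Matrix (Fin 3) (Fin 3) (MvPolynomial (Fin 3 × Fin 3) F) := Matrix.of fun i j => X (i, j)
  have h2' : IsUnit (2 : MvPolynomial (Fin 3 × Fin 3) F) := by
    rw [← map_ofNat C 2]
    exact h2.isUnit.map C
  have hsq : (∏ i, X (i, σ i)) ^ 2 ∈ M.subpermanentIdeal :=
    M.subpermanentIdeal_submatrix_le Function.injective_id σ.injective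
      ((M.submatrix id σ).diag_prod_sq_mem_subpermanentIdeal h2')
  exact ⟨hsq, 2, hsq⟩
end

section
/- Let F be a field of characteristic not 2 and let M be the generic 4×4 matrix with entries x_{ij} over R = F[x_{ij} : 1≤i,j≤4]. Then the ideal P_2(M) generated by all 2×2 subpermanents of M is not integrally closed: the element x_{41}x_{32}x_{23}x_{14} lies in the integral closure of P_2(M) (its square is a product of two elements of P_2(M)) but not in P_2(M). -/
open MvPolynomial

noncomputable section PermAux
variable (F : Type*) [Field F]

/-- exponent Finsupp of the monomial `∏ t, X (t, σ t)` -/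
def Mm (σ : Fin 4 → Fin 4) : (Fin 4 × Fin 4) →₀ ℕ :=
  ∑ t : Fin 4, Finsupp.single (t, σ t) 1

lemma Mm_apply (σ : Fin 4 → Fin 4) (a b : Fin 4) :
    Mm σ (a, b) = if σ a = b then 1 else 0 := by
  classical
  rw [Mm, Finset.sum_apply']
  rw [Finset.sum_eq_single a]
  · simp [Finsupp.single_apply, Prod.ext_iff]
  · intro t _ ht
    simp [Finsupp.single_apply, Prod.ext_iff, ht]
  · simp

/-- determinant-style weight of a function `Fin 4 → Fin 4` -/
def w (σ : Fin 4 → Fin 4) : F :=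
  (Matrix.of fun a b : Fin 4 => if σ a = b then (1 : F) else 0).det

lemma w_swap (σ : Fin 4 → Fin 4) (i k : Fin 4) (hik : i ≠ k) :
    w F (σ ∘ Equiv.swap i k) = - w F σ := by
  classical
  have h : (Matrix.of fun a b : Fin 4 => if (σ ∘ Equiv.swap i k) a = b then (1 : F) else 0)
      = (Matrix.of fun a b : Fin 4 => if σ a = b then (1 : F) else 0).submatrix
          (Equiv.swap i k) id := rfl
  rw [w, h, Matrix.det_permute, Equiv.Perm.sign_swap hik, w]
  push_cast
  ring

lemma mem_supp (σ : Fin 4 → Fin 4) (a b : Fin 4) :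
    (a, b) ∈ (Mm σ).support ↔ σ a = b := by
  simp [Finsupp.mem_support_iff, Mm_apply]

lemma coeff_step (p : MvPolynomial (Fin 4 × Fin 4) F) (i k j l : Fin 4)
    (hik : i ≠ k) (σ : Fin 4 → Fin 4) :
    coeff (Mm (σ ∘ Equiv.swap i k)) (p * X (k, j) * X (i, l))
      = coeff (Mm σ) (p * X (i, j) * X (k, l)) := by
  classical
  have hsl : (σ ∘ ⇑(Equiv.swap i k)) i = σ k := by simp
  have hsr : (σ ∘ ⇑(Equiv.swap i k)) k = σ i := by simp
  rw [coeff_mul_X', coeff_mul_X']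
  conv_rhs => rw [coeff_mul_X', coeff_mul_X']
  by_cases hkl : σ k = l
  · rw [if_pos ((mem_supp σ k l).2 hkl),
      if_pos (show (i, l) ∈ (Mm (σ ∘ ⇑(Equiv.swap i k))).support by
        rw [mem_supp, hsl]; exact hkl)]
    by_cases hij : σ i = j
    · have m1 : (k, j) ∈ (Mm (σ ∘ Equiv.swap i k) - Finsupp.single (i, l) 1).support := by
        simp only [Finsupp.mem_support_iff, Finsupp.tsub_apply, Mm_apply, hsr,
          Finsupp.single_apply]
        simp [hij, Prod.ext_iff, hik]
      have m2 : (i, j) ∈ (Mm σ - Finsupp.single (k, l) 1).support := by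
        simp only [Finsupp.mem_support_iff, Finsupp.tsub_apply, Mm_apply,
          Finsupp.single_apply]
        simp [hij, Prod.ext_iff, Ne.symm hik]
      rw [if_pos m1, if_pos m2]
      congr 1
      ext ⟨a, b⟩
      simp only [Finsupp.tsub_apply, Mm_apply, Finsupp.single_apply, Function.comp_apply]
      rcases eq_or_ne a i with rfl | hai
      · simp only [Equiv.swap_apply_left]
        simp only [Prod.mk.injEq]
        simp only [hik, Ne.symm hik, false_and, and_false, if_false, true_and, hkl, hij]
        split_ifs <;> omega
      · rcases eq_or_ne a k with rfl | hak
        · simp only [Equiv.swap_apply_right]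
          simp only [Prod.mk.injEq]
          simp only [hik, Ne.symm hik, false_and, and_false, if_false, true_and, hkl, hij]
          split_ifs <;> omega
        · simp only [Equiv.swap_apply_of_ne_of_ne hai hak]
          simp only [Prod.mk.injEq]
          simp only [Ne.symm hai, Ne.symm hak, false_and, and_false, if_false]
    · have m1 : (k, j) ∉ (Mm (σ ∘ Equiv.swap i k) - Finsupp.single (i, l) 1).support := by
        simp only [Finsupp.mem_support_iff, Finsupp.tsub_apply, Mm_apply, hsr,
          Finsupp.single_apply]
        simp [hij]
      have m2 : (i, j) ∉ (Mm σ - Finsupp.single (k, l) 1).support := by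
        simp only [Finsupp.mem_support_iff, Finsupp.tsub_apply, Mm_apply,
          Finsupp.single_apply]
        simp [hij]
      rw [if_neg m1, if_neg m2]
  · rw [if_neg (show (i, l) ∉ (Mm (σ ∘ ⇑(Equiv.swap i k))).support by
        rw [mem_supp, hsl]; exact hkl),
      if_neg (show (k, l) ∉ (Mm σ).support by rw [mem_supp]; exact hkl)]

/-- the alternating linear functional extracting the "permutation component" -/
def L (f : MvPolynomial (Fin 4 × Fin 4) F) : F :=
  ∑ σ : Fin 4 → Fin 4, w F σ * coeff (Mm σ) f

lemma L_zero : L F 0 = 0 := by simp [L]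

lemma L_add (f g : MvPolynomial (Fin 4 × Fin 4) F) : L F (f + g) = L F f + L F g := by
  simp [L, coeff_add, mul_add, Finset.sum_add_distrib]

lemma swap_involutive (i k : Fin 4) :
    Function.Involutive (fun σ : Fin 4 → Fin 4 => σ ∘ Equiv.swap i k) := by
  intro σ
  funext t
  simp [Function.comp, Equiv.swap_apply_self]

lemma L_gen (p : MvPolynomial (Fin 4 × Fin 4) F) (i k j l : Fin 4) (hik : i ≠ k) :
    L F (p * (X (i, j) * X (k, l) + X (k, j) * X (i, l))) = 0 := by
  have hexp : p * (X (i, j) * X (k, l) + X (k, j) * X (i, l))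
      = (p * X (i, j) * X (k, l)) + (p * X (k, j) * X (i, l)) := by ring
  rw [hexp, L_add]
  have hsum : (∑ σ : Fin 4 → Fin 4, w F σ * coeff (Mm σ) (p * X (k, j) * X (i, l)))
      = ∑ σ : Fin 4 → Fin 4, -(w F σ * coeff (Mm σ) (p * X (i, j) * X (k, l))) := by
    refine Fintype.sum_bijective (fun σ : Fin 4 → Fin 4 => σ ∘ Equiv.swap i k)
      ((swap_involutive i k).bijective) _ _ ?_
    intro σ
    have h1 := coeff_step F p k i l j (Ne.symm hik) (σ ∘ Equiv.swap i k)
    rw [Equiv.swap_comm k i] at h1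
    have h2 : (σ ∘ ⇑(Equiv.swap i k)) ∘ ⇑(Equiv.swap i k) = σ := by
      funext t; simp [Function.comp, Equiv.swap_apply_self]
    rw [h2] at h1
    show w F σ * coeff (Mm σ) (p * X (k, j) * X (i, l))
      = -(w F (σ ∘ Equiv.swap i k) * coeff (Mm (σ ∘ Equiv.swap i k)) (p * X (i, j) * X (k, l)))
    rw [show p * X (k, j) * X (i, l) = p * X (i, l) * X (k, j) from by ring, h1,
      show p * X (i, j) * X (k, l) = p * X (k, l) * X (i, j) from by ring,
      w_swap F σ i k hik]
    ring
  rw [L, L, hsum]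
  simp [Finset.sum_neg_distrib]

def σ0 : Fin 4 → Fin 4 := Fin.rev

lemma w_σ0 : w F σ0 = 1 := by
  have h : (Matrix.of fun a b : Fin 4 => if σ0 a = b then (1 : F) else 0)
      = (1 : Matrix (Fin 4) (Fin 4) F).submatrix (⇑(Fin.revPerm : Equiv.Perm (Fin 4))) id := by
    ext a b
    simp [σ0, Matrix.one_apply, Matrix.submatrix_apply]
    congr
  rw [w, h, Matrix.det_permute, Matrix.det_one,
    show Equiv.Perm.sign (Fin.revPerm : Equiv.Perm (Fin 4)) = 1 from by decide]
  norm_num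

lemma Mm_inj {σ τ : Fin 4 → Fin 4} (h : Mm σ = Mm τ) : σ = τ := by
  funext t
  have h1 := congrArg (fun m => m (t, σ t)) h
  simp only [Mm_apply, eq_self_iff_true, if_true] at h1
  by_contra hne
  rw [if_neg (fun h' => hne h'.symm)] at h1
  exact one_ne_zero h1

lemma r_eq : (X (3, 0) * X (2, 1) * X (1, 2) * X (0, 3) : MvPolynomial (Fin 4 × Fin 4) F)
    = monomial (Mm σ0) 1 := by
  have h : Mm σ0 = Finsupp.single ((3 : Fin 4), (0 : Fin 4)) 1 + Finsupp.single (2, 1) 1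
      + Finsupp.single (1, 2) 1 + Finsupp.single (0, 3) 1 := by
    rw [Mm, Fin.sum_univ_four]
    have e0 : σ0 0 = 3 := rfl
    have e1 : σ0 1 = 2 := rfl
    have e2 : σ0 2 = 1 := rfl
    have e3 : σ0 3 = 0 := rfl
    rw [e0, e1, e2, e3]
    abel
  rw [h]
  show monomial (Finsupp.single ((3:Fin 4), (0:Fin 4)) 1) (1:F) * monomial (Finsupp.single (2,1) 1) 1
      * monomial (Finsupp.single (1,2) 1) 1 * monomial (Finsupp.single (0,3) 1) 1 = _
  simp [monomial_mul]

lemma L_r : L F (X (3, 0) * X (2, 1) * X (1, 2) * X (0, 3)) = 1 := by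
  rw [L, r_eq]
  have hc : ∀ σ : Fin 4 → Fin 4, coeff (Mm σ) (monomial (Mm σ0) (1 : F))
      = if σ0 = σ then 1 else 0 := by
    intro σ
    rw [coeff_monomial]
    by_cases h : σ0 = σ
    · rw [if_pos h, if_pos (by rw [h])]
    · rw [if_neg h, if_neg (fun h' => h (Mm_inj h'))]
  calc (∑ σ : Fin 4 → Fin 4, w F σ * coeff (Mm σ) (monomial (Mm σ0) (1 : F)))
      = ∑ σ : Fin 4 → Fin 4, if σ0 = σ then w F σ else 0 := by
        refine Finset.sum_congr rfl fun σ _ => ?_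
        rw [hc σ, mul_ite, mul_one, mul_zero]
    _ = w F σ0 := by rw [Finset.sum_ite_eq]; simp
    _ = 1 := w_σ0 F

lemma not_mem_span :
    (X (3, 0) * X (2, 1) * X (1, 2) * X (0, 3) : MvPolynomial (Fin 4 × Fin 4) F) ∉
      Ideal.span {f : MvPolynomial (Fin 4 × Fin 4) F |
        ∃ (i k j l : Fin 4), i < k ∧ j < l ∧
          f = X (i, j) * X (k, l) + X (k, j) * X (i, l)} := by
  intro hmem
  have key : ∀ q : MvPolynomial (Fin 4 × Fin 4) F,
      L F (q * (X (3, 0) * X (2, 1) * X (1, 2) * X (0, 3))) = 0 := by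
    refine Submodule.span_induction
      (p := fun x _ => ∀ q : MvPolynomial (Fin 4 × Fin 4) F, L F (q * x) = 0)
      ?_ ?_ ?_ ?_ hmem
    · rintro x ⟨i, k, j, l, hik, hjl, rfl⟩ q
      exact L_gen F q i k j l (ne_of_lt hik)
    · intro q; rw [mul_zero, L_zero]
    · intro x y _ _ hx' hy' q
      rw [mul_add, L_add, hx' q, hy' q, add_zero]
    · intro a x _ hx' q
      rw [smul_eq_mul, ← mul_assoc]
      exact hx' (q * a)
  have h1 := key 1
  rw [one_mul, L_r] at h1
  exact one_ne_zero h1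

end PermAux

/-- `M` is the generic 4×4 matrix with entries `x_{ij} = X (i,j)` (indices
0–3 here standing for 1–4) and `I = P₂(M)` is the ideal of 2×2 subpermanents.
The element `r = x₄₁x₃₂x₂₃x₁₄` is not in `I`, yet its square is a product of
two elements of `I`, and `r` satisfies an equation of integral dependence
`r^k + a₁ r^{k-1} + ⋯ + a_k = 0` with `aᵢ ∈ Iⁱ`; hence `r` lies in the
integral closure of `I` and `I` is not integrally closed. -/
theorem permanental_not_integrally_closed (F : Type*) [Field F] (h2 : (2 : F) ≠ 0) :
    (X (3, 0) * X (2, 1) * X (1, 2) * X (0, 3) : MvPolynomial (Fin 4 × Fin 4) F) ∉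
      Ideal.span {f : MvPolynomial (Fin 4 × Fin 4) F |
        ∃ (i k j l : Fin 4), i < k ∧ j < l ∧
          f = X (i, j) * X (k, l) + X (k, j) * X (i, l)} ∧
    (∃ a b : MvPolynomial (Fin 4 × Fin 4) F,
      a ∈ Ideal.span {f : MvPolynomial (Fin 4 × Fin 4) F |
        ∃ (i k j l : Fin 4), i < k ∧ j < l ∧
          f = X (i, j) * X (k, l) + X (k, j) * X (i, l)} ∧
      b ∈ Ideal.span {f : MvPolynomial (Fin 4 × Fin 4) F |
        ∃ (i k j l : Fin 4), i < k ∧ j < l ∧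
          f = X (i, j) * X (k, l) + X (k, j) * X (i, l)} ∧
      (X (3, 0) * X (2, 1) * X (1, 2) * X (0, 3) : MvPolynomial (Fin 4 × Fin 4) F) ^ 2
        = a * b) ∧
    (∃ k : ℕ, 0 < k ∧ ∃ a : ℕ → MvPolynomial (Fin 4 × Fin 4) F,
      (∀ i ∈ Finset.Icc 1 k, a i ∈
        (Ideal.span {f : MvPolynomial (Fin 4 × Fin 4) F |
          ∃ (i' k' j' l' : Fin 4), i' < k' ∧ j' < l' ∧
            f = X (i', j') * X (k', l') + X (k', j') * X (i', l')}) ^ i) ∧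
      (X (3, 0) * X (2, 1) * X (1, 2) * X (0, 3) : MvPolynomial (Fin 4 × Fin 4) F) ^ k +
        ∑ i ∈ Finset.Icc 1 k,
          a i * (X (3, 0) * X (2, 1) * X (1, 2) * X (0, 3)) ^ (k - i) = 0) := by
  set I : Ideal (MvPolynomial (Fin 4 × Fin 4) F) :=
    Ideal.span {f : MvPolynomial (Fin 4 × Fin 4) F |
      ∃ (i k j l : Fin 4), i < k ∧ j < l ∧
        f = X (i, j) * X (k, l) + X (k, j) * X (i, l)} with hI
  have gmem : ∀ i k j l : Fin 4, i < k → j < l →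
      X (i, j) * X (k, l) + X (k, j) * X (i, l) ∈ I :=
    fun i k j l hik hjl => Ideal.subset_span ⟨i, k, j, l, hik, hjl, rfl⟩
  -- the two monomial multiples of 2 lying in I
  have hA : (2 : MvPolynomial (Fin 4 × Fin 4) F) * (X (2,1) * X (1,2) * X (0,3) ^ 2) ∈ I := by
    have e : (2 : MvPolynomial (Fin 4 × Fin 4) F) * (X (2,1) * X (1,2) * X (0,3) ^ 2)
        = (-(X (0,3) * X (2,3))) * (X (0,1) * X (1,2) + X (1,1) * X (0,2))
          + (X (0,2) * X (2,3)) * (X (0,1) * X (1,3) + X (1,1) * X (0,3))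
          + (-(X (0,1) * X (2,3))) * (X (0,2) * X (1,3) + X (1,2) * X (0,3))
          + (2 * X (0,3) * X (1,2)) * (X (0,1) * X (2,3) + X (2,1) * X (0,3)) := by
      ring
    rw [e]
    exact add_mem (add_mem (add_mem
      (I.mul_mem_left _ (gmem 0 1 1 2 (by decide) (by decide)))
      (I.mul_mem_left _ (gmem 0 1 1 3 (by decide) (by decide))))
      (I.mul_mem_left _ (gmem 0 1 2 3 (by decide) (by decide))))
      (I.mul_mem_left _ (gmem 0 2 1 3 (by decide) (by decide)))
  have hB : (2 : MvPolynomial (Fin 4 × Fin 4) F) * (X (3,0) ^ 2 * X (2,1) * X (1,2)) ∈ I := by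
    have e : (2 : MvPolynomial (Fin 4 × Fin 4) F) * (X (3,0) ^ 2 * X (2,1) * X (1,2))
        = (-(X (3,0) * X (3,2))) * (X (1,0) * X (2,1) + X (2,0) * X (1,1))
          + (X (3,0) * X (3,1)) * (X (1,0) * X (2,2) + X (2,0) * X (1,2))
          + (X (3,0) ^ 2) * (X (1,1) * X (2,2) + X (2,1) * X (1,2))
          + (X (2,0) * X (3,2) - X (2,2) * X (3,0)) * (X (1,0) * X (3,1) + X (3,0) * X (1,1))
          + (X (2,1) * X (3,0) - X (2,0) * X (3,1)) * (X (1,0) * X (3,2) + X (3,0) * X (1,2)) := by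
      ring
    rw [e]
    exact add_mem (add_mem (add_mem (add_mem
      (I.mul_mem_left _ (gmem 1 2 0 1 (by decide) (by decide)))
      (I.mul_mem_left _ (gmem 1 2 0 2 (by decide) (by decide))))
      (I.mul_mem_left _ (gmem 1 2 1 2 (by decide) (by decide))))
      (I.mul_mem_left _ (gmem 1 3 0 1 (by decide) (by decide))))
      (I.mul_mem_left _ (gmem 1 3 0 2 (by decide) (by decide)))
  have h1 : (C ((2 : F)⁻¹) : MvPolynomial (Fin 4 × Fin 4) F) * 2 = 1 := by
    rw [show (2 : MvPolynomial (Fin 4 × Fin 4) F) = C (2 : F) from (map_ofNat C 2).symm,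
      ← C_mul, inv_mul_cancel₀ h2, C_1]
  set aa : MvPolynomial (Fin 4 × Fin 4) F :=
    C ((2 : F)⁻¹) * ((2 : MvPolynomial (Fin 4 × Fin 4) F) * (X (2,1) * X (1,2) * X (0,3) ^ 2))
    with haa
  set bb : MvPolynomial (Fin 4 × Fin 4) F :=
    C ((2 : F)⁻¹) * ((2 : MvPolynomial (Fin 4 × Fin 4) F) * (X (3,0) ^ 2 * X (2,1) * X (1,2)))
    with hbb
  have haaI : aa ∈ I := I.mul_mem_left _ hA
  have hbbI : bb ∈ I := I.mul_mem_left _ hB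
  have hab : (X (3, 0) * X (2, 1) * X (1, 2) * X (0, 3) : MvPolynomial (Fin 4 × Fin 4) F) ^ 2
      = aa * bb := by
    have e : aa * bb = (C ((2 : F)⁻¹) * 2) * ((C ((2 : F)⁻¹) * 2) *
        (X (3, 0) * X (2, 1) * X (1, 2) * X (0, 3)) ^ 2) := by
      rw [haa, hbb]; ring
    rw [e, h1, one_mul, one_mul]
  refine ⟨not_mem_span F, ⟨aa, bb, haaI, hbbI, hab⟩, 2, by norm_num,
    (fun n => if n = 2 then -(aa * bb) else 0), ?_, ?_⟩
  · intro i hi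
    obtain ⟨hl, hr⟩ := Finset.mem_Icc.1 hi
    interval_cases i
    · simp only [if_neg (by norm_num : (1 : ℕ) ≠ 2)]
      exact zero_mem _
    · simp only [if_pos rfl]
      rw [pow_two]
      exact neg_mem (Ideal.mul_mem_mul haaI hbbI)
  · rw [show Finset.Icc 1 2 = ({1, 2} : Finset ℕ) from rfl,
      Finset.sum_insert (by decide), Finset.sum_singleton, hab]
    simp
end

section
/- Let F be a field of characteristic not 2 and let M be the generic 3×3 matrix with entries x_{ij} over R = F[x_{ij}]. Let 𝔪 = ⟨x_{ij} : 1≤i,j≤3⟩ be the homogeneous maximal ideal, and let Q = P_2(M) + ⟨x_{ij}² : 1≤i,j≤3⟩. Then Q is an 𝔪-primary ideal of R. -/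
/-!
Every generator of `Q` has zero constant term, so `Q ⊆ 𝔪`; conversely every variable squared
lies in `Q`, so `𝔪 ⊆ √Q`. Hence `√Q = 𝔪`, which is maximal because `R / 𝔪 ≅ F`, and an ideal
with maximal radical is primary.
-/

open MvPolynomial

namespace MvPolynomial

variable {σ : Type*}

theorem idealOfVars_eq_ker_constantCoeff (R : Type*) [CommSemiring R] :
    idealOfVars σ R = RingHom.ker (constantCoeff : MvPolynomial σ R →+* R) := by
  ext p
  rw [← pow_one (idealOfVars σ R), mem_pow_idealOfVars_iff', RingHom.mem_ker,
    constantCoeff_eq]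
  simp [Finsupp.degree_eq_zero_iff]

theorem isMaximal_idealOfVars (K : Type*) [Field K] : (idealOfVars σ K).IsMaximal := by
  rw [idealOfVars_eq_ker_constantCoeff]
  exact RingHom.ker_isMaximal_of_surjective _ fun c => ⟨C c, constantCoeff_C σ c⟩

theorem radical_eq_idealOfVars {K : Type*} [Field K] {I : Ideal (MvPolynomial σ K)}
    (hI : I ≤ idealOfVars σ K) (hX : ∀ i, ∃ n, X i ^ n ∈ I) :
    I.radical = idealOfVars σ K := by
  refine le_antisymm ?_ ?_
  · exact (Ideal.radical_mono hI).trans_eq (isMaximal_idealOfVars K).isPrime.radical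
  · rw [idealOfVars, Ideal.span_le]
    rintro _ ⟨i, rfl⟩
    exact hX i

theorem isPrimary_and_radical_eq_idealOfVars {K : Type*} [Field K]
    {I : Ideal (MvPolynomial σ K)} (hI : I ≤ idealOfVars σ K) (hX : ∀ i, ∃ n, X i ^ n ∈ I) :
    I.IsPrimary ∧ I.radical = idealOfVars σ K := by
  have hrad := radical_eq_idealOfVars hI hX
  exact ⟨Ideal.isPrimary_of_isMaximal_radical (hrad ▸ isMaximal_idealOfVars K), hrad⟩

end MvPolynomial

theorem Q_is_m_primary_general (F : Type*) [Field F] :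
    (Ideal.span {f : MvPolynomial (Fin 3 × Fin 3) F |
        ∃ i k j l : Fin 3, i < k ∧ j < l ∧
          f = X (i, j) * X (k, l) + X (k, j) * X (i, l)} +
      Ideal.span {f : MvPolynomial (Fin 3 × Fin 3) F |
        ∃ i j : Fin 3, f = X (i, j) ^ 2}).IsPrimary ∧
    (Ideal.span {f : MvPolynomial (Fin 3 × Fin 3) F |
        ∃ i k j l : Fin 3, i < k ∧ j < l ∧
          f = X (i, j) * X (k, l) + X (k, j) * X (i, l)} +
      Ideal.span {f : MvPolynomial (Fin 3 × Fin 3) F |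
        ∃ i j : Fin 3, f = X (i, j) ^ 2}).radical =
      Ideal.span {f : MvPolynomial (Fin 3 × Fin 3) F |
        ∃ i j : Fin 3, f = X (i, j)} := by
  have h𝔪 : {f : MvPolynomial (Fin 3 × Fin 3) F | ∃ i j : Fin 3, f = X (i, j)} =
      Set.range X := by
    ext f
    simp [eq_comm]
  rw [h𝔪]
  refine isPrimary_and_radical_eq_idealOfVars ?_ fun ⟨i, j⟩ =>
    ⟨2, Ideal.mem_sup_right (Ideal.subset_span ⟨i, j, rfl⟩)⟩
  rw [idealOfVars_eq_ker_constantCoeff, Submodule.add_eq_sup, sup_le_iff, Ideal.span_le,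
    Ideal.span_le]
  constructor
  · rintro _ ⟨i, k, j, l, -, -, rfl⟩
    simp
  · rintro _ ⟨i, j, rfl⟩
    simp

/-- `M` is the generic 3×3 matrix with entries `x_{ij} = X (i,j)`, `𝔪` is the
homogeneous maximal ideal generated by all variables, and
`Q = P₂(M) + ⟨x_{ij}²⟩`.  Then `Q` is `𝔪`-primary: `Q` is a primary ideal
whose radical is `𝔪`. -/
theorem Q_is_m_primary (F : Type*) [Field F] (h2 : (2 : F) ≠ 0) :
    (Ideal.span {f : MvPolynomial (Fin 3 × Fin 3) F |
        ∃ i k j l : Fin 3, i < k ∧ j < l ∧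
          f = X (i, j) * X (k, l) + X (k, j) * X (i, l)} +
      Ideal.span {f : MvPolynomial (Fin 3 × Fin 3) F |
        ∃ i j : Fin 3, f = X (i, j) ^ 2}).IsPrimary ∧
    (Ideal.span {f : MvPolynomial (Fin 3 × Fin 3) F |
        ∃ i k j l : Fin 3, i < k ∧ j < l ∧
          f = X (i, j) * X (k, l) + X (k, j) * X (i, l)} +
      Ideal.span {f : MvPolynomial (Fin 3 × Fin 3) F |
        ∃ i j : Fin 3, f = X (i, j) ^ 2}).radical =
      Ideal.span {f : MvPolynomial (Fin 3 × Fin 3) F |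
        ∃ i j : Fin 3, f = X (i, j)} :=
  Q_is_m_primary_general F
end
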